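/- arXiv:2412.10527 — 6 statements merged into one kernel-verified Lean document; each statement's English description precedes it below -/
import Mathlib

section
/- Let X be a Banach space, d ≥ 1, α a reasonable cross norm on ⊗^d X, and let {x_n} be a sequence in X such that the sequence of elementary tensors {x_n ⊗ ⋯ ⊗ x_n} converges in the completion ⊗̂_α^d X to some z. Then there exist x ∈ X and a subsequence {x_{n_j}} such that x_{n_j} → x in norm and z = x ⊗ ⋯ ⊗ x. In particular, the Veronese cone 𝕍^d_X := {x ⊗ ⋯ ⊗ x : x ∈ X} is closed in ⊗̂_α^d X. -/
open scoped TensorProduct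
open PiTensorProduct Filter

noncomputable def tensorEval {𝕜 : Type*} [RCLike 𝕜] {X : Type*} [NormedAddCommGroup X]
    [NormedSpace 𝕜 X] {d : ℕ} (f : Fin d → (X →L[𝕜] 𝕜)) :
    (⨂[𝕜] (_ : Fin d), X) →ₗ[𝕜] 𝕜 :=
  PiTensorProduct.lift
    ((MultilinearMap.mkPiAlgebra 𝕜 (Fin d) 𝕜).compLinearMap fun i => (f i).toLinearMap)

def IsNorm (𝕜 : Type*) [RCLike 𝕜] {T : Type*} [AddCommGroup T] [Module 𝕜 T]
    (N : T → ℝ) : Prop :=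
  (∀ z, N z = 0 ↔ z = 0) ∧ (∀ (c : 𝕜) z, N (c • z) = ‖c‖ * N z) ∧
    ∀ z w, N (z + w) ≤ N z + N w

def IsReasonableCrossNorm {𝕜 : Type*} [RCLike 𝕜] {X : Type*} [NormedAddCommGroup X]
    [NormedSpace 𝕜 X] {d : ℕ} (N : (⨂[𝕜] (_ : Fin d), X) → ℝ) : Prop :=
  IsNorm 𝕜 N ∧ (∀ x : Fin d → X, N (tprod 𝕜 x) ≤ ∏ i, ‖x i‖) ∧
    ∀ (f : Fin d → (X →L[𝕜] 𝕜)) (z : ⨂[𝕜] (_ : Fin d), X),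
      ‖tensorEval f z‖ ≤ (∏ i, ‖f i‖) * N z


section Aux
variable {X : Type*} [NormedAddCommGroup X] [NormedSpace ℝ X] [CompleteSpace X]
  {E : Type*} [NormedAddCommGroup E] [NormedSpace ℝ E] {m : ℕ}

lemma pow_abs_sub_le (k : ℕ) (B p q : ℝ) (hp : 0 ≤ p) (hq : 0 ≤ q) (hpB : p ≤ B) (hqB : q ≤ B) :
    |p ^ k - q ^ k| ≤ k * B ^ (k - 1) * |p - q| := by
  have hB : 0 ≤ B := le_trans hp hpB
  induction k with
  | zero => simp
  | succ k ih =>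
    have h1 : p ^ (k+1) - q ^ (k+1) = p ^ k * (p - q) + q * (p ^ k - q ^ k) := by ring
    have e1 : |p ^ k * (p - q)| ≤ B ^ k * |p - q| := by
      rw [abs_mul]
      refine mul_le_mul_of_nonneg_right ?_ (abs_nonneg _)
      rw [abs_of_nonneg (pow_nonneg hp k)]
      exact pow_le_pow_left₀ hp hpB k
    have e2 : |q * (p ^ k - q ^ k)| ≤ B * (k * B ^ (k-1) * |p - q|) := by
      rw [abs_mul]
      have : |q| ≤ B := by rw [abs_of_nonneg hq]; exact hqB
      exact mul_le_mul this ih (abs_nonneg _) hB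
    have h2 : |p ^ (k+1) - q ^ (k+1)| ≤ B ^ k * |p - q| + B * (k * B ^ (k-1) * |p - q|) := by
      rw [h1]; exact (abs_add_le _ _).trans (add_le_add e1 e2)
    refine h2.trans ?_
    have h3 : B * (k * B ^ (k-1)) ≤ k * B ^ k := by
      rcases k with _ | j
      · simp
      · have : B * ((j+1:ℝ) * B ^ j) = (j+1:ℝ) * B ^ (j+1) := by ring
        simp only [Nat.add_sub_cancel]
        push_cast
        rw [this]
    have key : B ^ k + B * ((k:ℝ) * B ^ (k-1)) ≤ (↑k + 1) * B ^ k := by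
      have : ((k:ℝ)+1) * B ^ k = B ^ k + k * B ^ k := by ring
      rw [this]; linarith
    calc B ^ k * |p - q| + B * (↑k * B ^ (k - 1) * |p - q|)
        = (B ^ k + B * ((k:ℝ) * B ^ (k-1))) * |p - q| := by ring
      _ ≤ ((↑k + 1) * B ^ k) * |p - q| := mul_le_mul_of_nonneg_right key (abs_nonneg _)
      _ = ↑(k + 1) * B ^ (k + 1 - 1) * |p - q| := by push_cast; ring_nf

set_option maxHeartbeats 1000000 in
lemma lemA {X : Type*} [NormedAddCommGroup X] [NormedSpace ℝ X]
    {E : Type*} [NormedAddCommGroup E] [NormedSpace ℝ E]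
    {m : ℕ} (T : X → E)
    (hT1 : ∀ u : X, ‖T u‖ = ‖u‖ ^ (m+1))
    (hTsmul : ∀ (s : ℝ) (u : X), s ^ (m+1) = 1 → T (s • u) = T u)
    (hTeval : ∀ (f g : X →L[ℝ] ℝ), ‖f‖ ≤ 1 → ‖g‖ ≤ 1 → ∀ u v : X,
      |g u * (f u) ^ m - g v * (f v) ^ m| ≤ ‖T u - T v‖)
    (c B : ℝ) (hc : 0 < c)
    (u v : X) (hcu : c ≤ ‖u‖) (huB : ‖u‖ ≤ B) (hvB : ‖v‖ ≤ B)
    (hsmall : ‖T u - T v‖ ≤ c ^ (m+1) / 2) :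
    ∃ s : ℝ, (s = 1 ∨ (s = -1 ∧ Odd m)) ∧
      ‖u - s • v‖ ≤ ((1 + (m * B ^ m) / c ^ m) / c ^ m) * ‖T u - T v‖ := by
  set ε := ‖T u - T v‖ with hεdef
  have hε : 0 ≤ ε := norm_nonneg _
  have hcm : (0:ℝ) < c ^ m := pow_pos hc m
  have hcm1 : (0:ℝ) < c ^ (m+1) := pow_pos hc (m+1)
  have hB0 : (0:ℝ) < B := lt_of_lt_of_le hc (le_trans hcu huB)
  have hu0 : u ≠ 0 := by
    intro h; rw [h, norm_zero] at hcu; linarith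
  obtain ⟨f, hf1, hfu0⟩ := exists_dual_vector ℝ u (norm_ne_zero_iff.mpr hu0)
  have hfu : f u = ‖u‖ := by simpa using hfu0
  set a := ‖u‖ with ha
  set b := ‖v‖ with hb
  set t := f v with htdef
  have ha0 : 0 < a := lt_of_lt_of_le hc hcu
  have htb : |t| ≤ b := by
    have := f.le_opNorm v
    rw [hf1, one_mul] at this
    simpa [Real.norm_eq_abs] using this
  have h1 : |a ^ (m+1) - t ^ (m+1)| ≤ ε := by
    have h := hTeval f f hf1.le hf1.le u v
    rw [hfu] at h
    have : a * a ^ m - t * t ^ m = a ^ (m+1) - t ^ (m+1) := by ring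
    rwa [← htdef, this] at h
  have htabs : t ^ (m+1) ≤ |t| ^ (m+1) := by
    calc t ^ (m+1) ≤ |t ^ (m+1)| := le_abs_self _
      _ = |t| ^ (m+1) := abs_pow t (m+1)
  have hac : c ^ (m+1) ≤ a ^ (m+1) := pow_le_pow_left₀ hc.le hcu _
  have h2 : c ^ (m+1) / 2 ≤ t ^ (m+1) := by
    have := (abs_le.mp h1).2
    linarith
  have ht0 : t ≠ 0 := by
    intro h
    rw [h] at h2
    simp only [ne_eq, zero_pow (Nat.succ_ne_zero m)] at h2
    linarith
  set s : ℝ := if 0 ≤ t then 1 else -1 with hsdef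
  have hst : s * t = |t| := by
    rw [hsdef]
    split_ifs with h
    · rw [one_mul, abs_of_nonneg h]
    · rw [neg_one_mul, abs_of_neg (lt_of_not_ge h)]
  have hsadm : s = 1 ∨ (s = -1 ∧ Odd m) := by
    rw [hsdef]
    split_ifs with h
    · left; rfl
    · right
      refine ⟨rfl, ?_⟩
      rcases Nat.even_or_odd m with he | ho
      · exfalso
        have hodd : Odd (m+1) := Even.add_one he
        have : t ^ (m+1) < 0 := Odd.pow_neg hodd (lt_of_not_ge h)
        linarith
      · exact ho
  have hspow : s ^ (m+1) = 1 := by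
    rcases hsadm with h | ⟨h, ho⟩
    · rw [h, one_pow]
    · rw [h]
      exact Even.neg_one_pow (Odd.add_one ho)
  have hs1 : |s| = 1 := by
    rcases hsadm with h | ⟨h, _⟩ <;> rw [h] <;> simp
  have hTsv : T (s • v) = T v := hTsmul s v hspow
  have hbv : ‖s • v‖ = b := by
    rw [norm_smul, Real.norm_eq_abs, hs1, one_mul]
  have hΔ : abs (a - |t|) ≤ ε / c ^ m := by
    rw [le_div_iff₀ hcm]
    rcases le_total |t| a with hta | hat
    · have e1 : a ^ (m+1) - |t| ^ (m+1) ≤ ε := by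
        have := (abs_le.mp h1).2
        linarith
      have pa : a ^ (m+1) = a ^ m * a := pow_succ a m
      have pt : |t| ^ (m+1) = |t| ^ m * |t| := pow_succ |t| m
      have q1 : |t| ^ m ≤ a ^ m := pow_le_pow_left₀ (abs_nonneg t) hta m
      have q2 : c ^ m ≤ a ^ m := pow_le_pow_left₀ hc.le hcu m
      have habs' : abs (a - |t|) = a - |t| := abs_of_nonneg (by linarith)
      rw [habs']
      nlinarith [abs_nonneg t, pow_nonneg (abs_nonneg t) m]
    · have e1 : b ^ (m+1) - a ^ (m+1) ≤ ε := by
        have h := norm_sub_norm_le (T v) (T u)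
        rw [hT1, hT1, norm_sub_rev] at h
        rw [← ha, ← hb] at h
        linarith [h]
      have hab : a ≤ b := le_trans hat htb
      have pb : b ^ (m+1) = b ^ m * b := pow_succ b m
      have pa : a ^ (m+1) = a ^ m * a := pow_succ a m
      have q1 : a ^ m ≤ b ^ m := pow_le_pow_left₀ (norm_nonneg u) hab m
      have q2 : c ^ m ≤ b ^ m := pow_le_pow_left₀ hc.le (le_trans hcu hab) m
      have e2 : (b - a) * c ^ m ≤ b ^ (m+1) - a ^ (m+1) := by
        nlinarith [norm_nonneg u, ha0.le]
      have habs' : abs (a - |t|) ≤ b - a := by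
        rw [abs_of_nonpos (by linarith)]
        linarith
      calc abs (a - |t|) * c ^ m ≤ (b - a) * c ^ m :=
            mul_le_mul_of_nonneg_right habs' hcm.le
        _ ≤ b ^ (m+1) - a ^ (m+1) := e2
        _ ≤ ε := e1
  have hK0 : 0 ≤ ((1 + ((m:ℝ) * B ^ m) / c ^ m) / c ^ m) := by positivity
  by_cases huv : u - s • v = 0
  · exact ⟨s, hsadm, by rw [huv, norm_zero]; exact mul_nonneg hK0 hε⟩
  · obtain ⟨g, hg1, hgu0⟩ := exists_dual_vector ℝ (u - s • v) (norm_ne_zero_iff.mpr huv)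
    have hgu : g (u - s • v) = ‖u - s • v‖ := by simpa using hgu0
    have h3 := hTeval f g hf1.le hg1.le u (s • v)
    rw [hTsv, hfu] at h3
    have hfsv : f (s • v) = |t| := by
      rw [map_smul, smul_eq_mul, ← htdef, hst]
    rw [hfsv, ← hεdef] at h3
    have hgsv : |g (s • v)| ≤ B := by
      have h := g.le_opNorm (s • v)
      rw [hg1, one_mul, hbv] at h
      rw [Real.norm_eq_abs] at h
      exact h.trans hvB
    have hpow : abs (a ^ m - |t| ^ m) ≤ m * B ^ (m-1) * (ε / c ^ m) := by
      refine (pow_abs_sub_le m B a |t| (norm_nonneg u) (abs_nonneg t) huB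
        (le_trans htb hvB)).trans ?_
      exact mul_le_mul_of_nonneg_left hΔ (by positivity)
    have key1 : ‖u - s • v‖ * a ^ m ≤ ε + B * ((m:ℝ) * B ^ (m-1) * (ε / c ^ m)) := by
      have expand : g (u - s • v) * a ^ m
          = (g u * a ^ m - g (s • v) * |t| ^ m) + g (s • v) * (|t| ^ m - a ^ m) := by
        rw [map_sub]; ring
      rw [← hgu, expand]
      have t1 : g u * a ^ m - g (s • v) * |t| ^ m ≤ ε := le_trans (le_abs_self _) h3
      have t2 : g (s • v) * (|t| ^ m - a ^ m) ≤ B * ((m:ℝ) * B ^ (m-1) * (ε / c ^ m)) := by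
        calc g (s • v) * (|t| ^ m - a ^ m) ≤ abs (g (s • v) * (|t| ^ m - a ^ m)) := le_abs_self _
          _ = |g (s • v)| * abs (|t| ^ m - a ^ m) := abs_mul _ _
          _ ≤ B * ((m:ℝ) * B ^ (m-1) * (ε / c ^ m)) :=
              mul_le_mul hgsv (by rw [abs_sub_comm]; exact hpow) (abs_nonneg _) hB0.le
      linarith
    have hBm : B * ((m:ℝ) * B ^ (m-1)) ≤ (m:ℝ) * B ^ m := by
      rcases m with _ | j
      · simp
      · have e : B * ((j+1:ℝ) * B ^ j) = (j+1:ℝ) * (B * B ^ j) := by ring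
        simp only [Nat.add_sub_cancel]
        push_cast
        rw [e, ← pow_succ']
    have main : ‖u - s • v‖ * c ^ m ≤ ε + (m:ℝ) * B ^ m * (ε / c ^ m) := by
      have hstep : B * ((m:ℝ) * B ^ (m-1) * (ε / c ^ m)) ≤ (m:ℝ) * B ^ m * (ε / c ^ m) := by
        have hd : 0 ≤ ε / c ^ m := div_nonneg hε hcm.le
        calc B * ((m:ℝ) * B ^ (m-1) * (ε / c ^ m)) = (B * ((m:ℝ) * B ^ (m-1))) * (ε / c ^ m) := by
              ring
          _ ≤ ((m:ℝ) * B ^ m) * (ε / c ^ m) := mul_le_mul_of_nonneg_right hBm hd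
      have key2 : ‖u - s • v‖ * c ^ m ≤ ‖u - s • v‖ * a ^ m :=
        mul_le_mul_of_nonneg_left (pow_le_pow_left₀ hc.le hcu m) (norm_nonneg _)
      linarith
    refine ⟨s, hsadm, ?_⟩
    have heq : ((1 + ((m:ℝ) * B ^ m) / c ^ m) / c ^ m) * ε
        = (ε + (m:ℝ) * B ^ m * (ε / c ^ m)) / c ^ m := by
      field_simp
    rw [heq, le_div_iff₀ hcm]
    exact main


set_option maxHeartbeats 1000000 in
lemma keyLemma (T : X → E)
    (hT1 : ∀ u : X, ‖T u‖ = ‖u‖ ^ (m+1))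
    (hTsmul : ∀ (s : ℝ) (u : X), s ^ (m+1) = 1 → T (s • u) = T u)
    (hTeval : ∀ (f g : X →L[ℝ] ℝ), ‖f‖ ≤ 1 → ‖g‖ ≤ 1 → ∀ u v : X,
      |g u * (f u) ^ m - g v * (f v) ^ m| ≤ ‖T u - T v‖)
    (hTcont : Continuous T)
    (x : ℕ → X) (z : E) (hconv : Tendsto (fun n => T (x n)) atTop (nhds z)) :
    ∃ (x₀ : X) (φ : ℕ → ℕ), StrictMono φ ∧
      Tendsto (fun j => x (φ j)) atTop (nhds x₀) ∧ z = T x₀ := by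
  have hnorm : Tendsto (fun n => ‖x n‖ ^ (m+1)) atTop (nhds ‖z‖) := by
    have h := hconv.norm
    simpa only [hT1] using h
  by_cases hz0 : ‖z‖ = 0
  · -- limit is zero
    have h0 : Tendsto (fun n => ‖x n‖) atTop (nhds 0) := by
      have hc : ContinuousAt (fun y : ℝ => y ^ (((m+1:ℕ):ℝ))⁻¹) 0 :=
        Real.continuousAt_rpow_const 0 _ (Or.inr (by positivity))
      have h2 : Tendsto (fun n => (‖x n‖ ^ (m+1) : ℝ) ^ (((m+1:ℕ):ℝ))⁻¹) atTop
          (nhds ((0:ℝ) ^ (((m+1:ℕ):ℝ))⁻¹)) := by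
        refine hc.tendsto.comp ?_
        rw [← hz0] at *
        exact hnorm.congr (fun n => rfl) |>.mono_right le_rfl |> fun h => by
          simpa [hz0] using hnorm
      rw [Real.zero_rpow (by positivity)] at h2
      refine h2.congr fun n => ?_
      exact Real.pow_rpow_inv_natCast (norm_nonneg _) (Nat.succ_ne_zero m)
    have hx0 : Tendsto x atTop (nhds 0) := tendsto_zero_iff_norm_tendsto_zero.mpr h0
    have hz : z = T 0 :=
      tendsto_nhds_unique hconv ((hTcont.tendsto 0).comp hx0)
    exact ⟨0, id, strictMono_id, hx0, hz⟩
  · have hL : 0 < ‖z‖ := lt_of_le_of_ne (norm_nonneg z) (Ne.symm hz0)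
    set L := ‖z‖ with hLdef
    set c : ℝ := (L/2) ^ (((m+1:ℕ):ℝ))⁻¹ with hcdef
    set B : ℝ := (2*L) ^ (((m+1:ℕ):ℝ))⁻¹ with hBdef
    have hc0 : 0 < c := Real.rpow_pos_of_pos (by linarith) _
    have hB0 : 0 < B := Real.rpow_pos_of_pos (by linarith) _
    have hcpow : c ^ (m+1) = L/2 :=
      Real.rpow_inv_natCast_pow (by linarith) (Nat.succ_ne_zero m)
    have hBpow : B ^ (m+1) = 2*L :=
      Real.rpow_inv_natCast_pow (by linarith) (Nat.succ_ne_zero m)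
    have hev : ∀ᶠ n in atTop, c ≤ ‖x n‖ ∧ ‖x n‖ ≤ B := by
      have hmem : Set.Ioo (L/2) (2*L) ∈ nhds L := Ioo_mem_nhds (by linarith) (by linarith)
      filter_upwards [hnorm.eventually hmem] with n hn
      obtain ⟨h1, h2⟩ := hn
      constructor
      · refine le_of_pow_le_pow_left₀ (Nat.succ_ne_zero m) (norm_nonneg _) ?_
        show c ^ (m+1) ≤ ‖x n‖ ^ (m+1)
        rw [hcpow]; linarith
      · refine le_of_pow_le_pow_left₀ (Nat.succ_ne_zero m) hB0.le ?_
        show ‖x n‖ ^ (m+1) ≤ B ^ (m+1)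
        rw [hBpow]; linarith
    set K := ((1 + ((m:ℝ) * B ^ m) / c ^ m) / c ^ m) with hKdef
    have hK0 : 0 < K := by
      have h1 : 0 < c ^ m := pow_pos hc0 m
      have h2 : 0 ≤ (m:ℝ) * B ^ m / c ^ m :=
        div_nonneg (mul_nonneg (Nat.cast_nonneg m) (pow_nonneg hB0.le m)) h1.le
      exact div_pos (by linarith) h1
    have hTc : CauchySeq (fun n => T (x n)) := hconv.cauchySeq
    set δ := min (c ^ (m+1) / 2) (c / (4 * K)) with hδdef
    have hδ0 : 0 < δ := lt_min (by positivity) (by positivity)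
    obtain ⟨N₁, hN₁⟩ := Metric.cauchySeq_iff.mp hTc δ hδ0
    obtain ⟨N₀, hN₀⟩ := eventually_atTop.mp hev
    set N₂ := max N₀ N₁ with hN₂def
    have hbd : ∀ n, N₂ ≤ n → c ≤ ‖x n‖ ∧ ‖x n‖ ≤ B := fun n hn =>
      hN₀ n (le_trans (le_max_left _ _) hn)
    have hdist : ∀ p q, N₂ ≤ p → N₂ ≤ q → ‖T (x p) - T (x q)‖ < δ := by
      intro p q hp hq
      have := hN₁ p (le_trans (le_max_right _ _) hp) q (le_trans (le_max_right _ _) hq)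
      rwa [dist_eq_norm] at this
    have hKδ : K * δ ≤ c / 4 := by
      calc K * δ ≤ K * (c / (4*K)) :=
            mul_le_mul_of_nonneg_left (min_le_right _ _) hK0.le
        _ = c/4 := by field_simp
    have pairc : ∀ p q, N₂ ≤ p → N₂ ≤ q → ∃ s : ℝ, (s = 1 ∨ (s = -1 ∧ Odd m)) ∧
        ‖x p - s • x q‖ ≤ K * ‖T (x p) - T (x q)‖ ∧ ‖x p - s • x q‖ < c/4 := by
      intro p q hp hq
      obtain ⟨s, h1, h2⟩ := lemA T hT1 hTsmul hTeval c B hc0 (x p) (x q)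
        (hbd p hp).1 (hbd p hp).2 (hbd q hq).2
        (le_of_lt (lt_of_lt_of_le (hdist p q hp hq) (min_le_left _ _)))
      refine ⟨s, h1, h2, lt_of_le_of_lt h2 ?_⟩
      calc K * ‖T (x p) - T (x q)‖ < K * δ :=
            mul_lt_mul_of_pos_left (hdist p q hp hq) hK0
        _ ≤ c/4 := hKδ
    have hxN2 : x N₂ ≠ 0 := by
      intro h
      have := (hbd N₂ le_rfl).1
      rw [h, norm_zero] at this
      linarith
    obtain ⟨f₀, hf₀1, hf₀x0⟩ := exists_dual_vector ℝ (x N₂) (norm_ne_zero_iff.mpr hxN2)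
    have hf₀x : f₀ (x N₂) = ‖x N₂‖ := by simpa using hf₀x0
    set σ : ℕ → ℝ := fun n => if 0 ≤ f₀ (x n) then 1 else -1 with hσdef
    have hσval : ∀ n, σ n = 1 ∨ σ n = -1 := by
      intro n
      rw [hσdef]
      dsimp only
      split_ifs
      exacts [Or.inl rfl, Or.inr rfl]
    have hσsq : ∀ n, σ n * σ n = 1 := by
      intro n
      rcases hσval n with h | h <;> rw [h] <;> norm_num
    have hfbnd : ∀ (s : ℝ) (p q : ℕ), |s| = 1 → ‖x p - s • x q‖ < c/4 →
        |f₀ (x p) - s * f₀ (x q)| < c/4 := by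
      intro s p q hs habs
      have h := f₀.le_opNorm (x p - s • x q)
      rw [hf₀1, one_mul] at h
      have he : f₀ (x p - s • x q) = f₀ (x p) - s * f₀ (x q) := by
        rw [map_sub, map_smul, smul_eq_mul]
      rw [Real.norm_eq_abs, he] at h
      exact lt_of_le_of_lt h habs
    have habs_of_adm : ∀ s : ℝ, (s = 1 ∨ (s = -1 ∧ Odd m)) → |s| = 1 := by
      intro s hs
      rcases hs with h | ⟨h, _⟩ <;> rw [h] <;> norm_num
    have hsig : ∀ n, N₂ ≤ n → 3*c/4 ≤ σ n * f₀ (x n) ∧ (σ n = 1 ∨ (σ n = -1 ∧ Odd m)) := by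
      intro n hn
      obtain ⟨s, hs1, _, hs3⟩ := pairc N₂ n le_rfl hn
      have hfb := hfbnd s N₂ n (habs_of_adm s hs1) hs3
      have hc2 := (hbd N₂ le_rfl).1
      have hsf : 3*c/4 ≤ s * f₀ (x n) := by
        have h2 := (abs_lt.mp hfb).2
        rw [hf₀x] at h2
        linarith
      have hs_eq : σ n = s := by
        rcases hs1 with h' | ⟨h', _⟩
        · rw [h'] at hsf
          rw [h', hσdef]
          dsimp only
          rw [if_pos (by linarith)]
        · rw [h'] at hsf
          rw [h', hσdef]
          dsimp only
          rw [if_neg (by intro hcon; nlinarith)]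
      rw [hs_eq]
      exact ⟨hsf, hs1⟩
    set y : ℕ → X := fun n => σ n • x n with hydef
    have hyC : CauchySeq y := by
      rw [Metric.cauchySeq_iff]
      intro δ' hδ'
      obtain ⟨N₄, hN₄⟩ := Metric.cauchySeq_iff.mp hTc (δ' / K) (by positivity)
      refine ⟨max N₂ N₄, fun p hp q hq => ?_⟩
      have hp2 : N₂ ≤ p := le_trans (le_max_left _ _) hp
      have hq2 : N₂ ≤ q := le_trans (le_max_left _ _) hq
      have hp4 : N₄ ≤ p := le_trans (le_max_right _ _) hp
      have hq4 : N₄ ≤ q := le_trans (le_max_right _ _) hq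
      obtain ⟨s, hs1, hs2, hs3⟩ := pairc p q hp2 hq2
      have hfb := hfbnd s p q (habs_of_adm s hs1) hs3
      have Ap := (hsig p hp2).1
      have Aq := (hsig q hq2).1
      obtain ⟨hl, hr⟩ := abs_lt.mp hfb
      have hs_eq : s = σ p * σ q := by
        rcases hσval p with hp' | hp' <;> rcases hσval q with hq' | hq' <;>
          rcases hs1 with hs' | ⟨hs', _⟩ <;>
          rw [hp'] at Ap ⊢ <;> rw [hq'] at Aq ⊢ <;> rw [hs'] at hl hr ⊢ <;>
          first
            | (exfalso; linarith)
            | norm_num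
      have hnb : ‖y p - y q‖ ≤ K * ‖T (x p) - T (x q)‖ := by
        have hmul : σ p * (σ p * σ q) = σ q := by
          rw [← mul_assoc, hσsq p, one_mul]
        have e : y p - y q = σ p • (x p - (σ p * σ q) • x q) := by
          rw [hydef]
          dsimp only
          rw [smul_sub, smul_smul, hmul]
        have hσp1 : |σ p| = 1 := by
          rcases hσval p with h | h <;> rw [h] <;> norm_num
        rw [e, norm_smul, Real.norm_eq_abs, hσp1, one_mul, ← hs_eq]
        exact hs2
      rw [dist_eq_norm]
      calc ‖y p - y q‖ ≤ K * ‖T (x p) - T (x q)‖ := hnb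
        _ < K * (δ'/K) := by
            refine mul_lt_mul_of_pos_left ?_ hK0
            have := hN₄ p hp4 q hq4
            rwa [dist_eq_norm] at this
        _ = δ' := by field_simp
    obtain ⟨x₀, hx₀⟩ := cauchySeq_tendsto_of_complete hyC
    have hσpow : ∀ n, N₂ ≤ n → σ n ^ (m+1) = 1 := by
      intro n hn
      rcases (hsig n hn).2 with h | ⟨h, ho⟩
      · rw [h, one_pow]
      · rw [h]
        exact Even.neg_one_pow ho.add_one
    have hTy : ∀ n, N₂ ≤ n → T (y n) = T (x n) := by
      intro n hn
      exact hTsmul (σ n) (x n) (hσpow n hn)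
    have hTz : Tendsto (fun n => T (y n)) atTop (nhds z) := by
      refine Tendsto.congr' ?_ hconv
      filter_upwards [eventually_ge_atTop N₂] with n hn
      exact (hTy n hn).symm
    have hzT : z = T x₀ :=
      tendsto_nhds_unique hTz ((hTcont.tendsto x₀).comp hx₀)
    by_cases hfr : ∃ᶠ n in atTop, σ n = 1
    · obtain ⟨φ, hφmono, hφσ⟩ := Filter.extraction_of_frequently_atTop hfr
      refine ⟨x₀, φ, hφmono, ?_, hzT⟩
      have he : (fun j => x (φ j)) = fun j => y (φ j) := by
        funext j
        rw [hydef]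
        dsimp only
        rw [hφσ j, one_smul]
      rw [he]
      exact hx₀.comp hφmono.tendsto_atTop
    · rw [Filter.not_frequently] at hfr
      have hev2 : ∀ᶠ n in atTop, σ n = -1 :=
        hfr.mono (fun n hn => (hσval n).resolve_left hn)
      obtain ⟨n₀, hn₀σ, hn₀2⟩ := (hev2.and (eventually_ge_atTop N₂)).exists
      have hodd : Odd m := by
        rcases (hsig n₀ hn₀2).2 with h | ⟨_, ho⟩
        · rw [h] at hn₀σ; norm_num at hn₀σ
        · exact ho
      refine ⟨-x₀, id, strictMono_id, ?_, ?_⟩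
      · have hxy : ∀ᶠ n in atTop, x n = -(y n) := by
          refine hev2.mono (fun n hn => ?_)
          rw [hydef]
          dsimp only
          rw [hn]
          simp
        have hyn : Tendsto (fun n => -(y n)) atTop (nhds (-x₀)) := hx₀.neg
        exact Tendsto.congr' (hxy.mono fun n hn => hn.symm) hyn
      · rw [hzT]
        have h := hTsmul (-1) x₀ (Even.neg_one_pow hodd.add_one)
        simp only [neg_one_smul] at h
        exact h.symm

end Aux

/-- if a sequence of diagonal tensors converges in the completion `⊗̂_α^d X`
(modelled as a Banach space `E` with a dense isometric linear embedding `ι` of the algebraic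
tensor product with the norm `α`), then some subsequence of `{x_n}` converges in norm to an
`x` with `z = x ⊗ ⋯ ⊗ x`; in particular the Veronese cone is closed in the completion. -/
theorem diag_sequence_converges {X : Type*} [NormedAddCommGroup X] [NormedSpace ℝ X]
    [CompleteSpace X] {d : ℕ} (hd : 1 ≤ d)
    (N : (⨂[ℝ] (_ : Fin d), X) → ℝ) (hN : IsReasonableCrossNorm N)
    {E : Type*} [NormedAddCommGroup E] [NormedSpace ℝ E] [CompleteSpace E]
    (ι : (⨂[ℝ] (_ : Fin d), X) →ₗ[ℝ] E)
    (hιiso : ∀ z, ‖ι z‖ = N z) (hιdense : Dense (Set.range ι))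
    (x : ℕ → X) (z : E)
    (hconv : Tendsto (fun n => ι (tprod ℝ (fun _ : Fin d => x n))) atTop (nhds z)) :
    (∃ (x₀ : X) (φ : ℕ → ℕ), StrictMono φ ∧
        Tendsto (fun j => x (φ j)) atTop (nhds x₀) ∧
        z = ι (tprod ℝ (fun _ : Fin d => x₀))) ∧
      IsClosed {e : E | ∃ x₀ : X, e = ι (tprod ℝ (fun _ : Fin d => x₀))} := by
  obtain ⟨m, rfl⟩ : ∃ m, d = m + 1 := ⟨d - 1, (Nat.succ_pred_eq_of_pos hd).symm⟩
  obtain ⟨hNnorm, hcross, hdual⟩ := hN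
  have hb : ∀ w : Fin (m+1) → X, ‖ι (tprod ℝ w)‖ ≤ ∏ i, ‖w i‖ := fun w => by
    rw [hιiso]; exact hcross w
  have hdual' : ∀ (f : Fin (m+1) → (X →L[ℝ] ℝ)) (zz : ⨂[ℝ] (_ : Fin (m+1)), X),
      ‖tensorEval f zz‖ ≤ (∏ i, ‖f i‖) * ‖ι zz‖ := fun f zz => by
    rw [hιiso]; exact hdual f zz
  have hT1 : ∀ u : X, ‖ι (tprod ℝ (fun _ : Fin (m+1) => u))‖ = ‖u‖ ^ (m+1) := by
    intro u
    refine le_antisymm (by simpa using hb (fun _ => u)) ?_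
    by_cases hu : u = 0
    · subst hu
      have h0 : tprod ℝ (fun _ : Fin (m+1) => (0:X)) = 0 :=
        (tprod ℝ : MultilinearMap ℝ (fun _ : Fin (m+1) => X) _).map_coord_zero 0 rfl
      simp [h0]
    · obtain ⟨f, hf1, hfu⟩ := exists_dual_vector ℝ u (norm_ne_zero_iff.mpr hu)
      have h := hdual' (fun _ => f) (tprod ℝ (fun _ : Fin (m+1) => u))
      have hev : tensorEval (fun _ : Fin (m+1) => f) (tprod ℝ (fun _ : Fin (m+1) => u))
          = (f u) ^ (m+1) := by
        simp [tensorEval]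
      rw [hev] at h
      have hfu' : f u = ‖u‖ := by simpa using hfu
      simp only [hfu', Finset.prod_const, Finset.card_univ, Fintype.card_fin, hf1, one_pow,
        one_mul, Real.norm_eq_abs, abs_pow, abs_norm] at h
      exact h
  have hTsmul : ∀ (s : ℝ) (u : X), s ^ (m+1) = 1 →
      ι (tprod ℝ (fun _ : Fin (m+1) => s • u)) = ι (tprod ℝ (fun _ : Fin (m+1) => u)) := by
    intro s u hs
    have e : tprod ℝ (fun _ : Fin (m+1) => s • u)
        = s ^ (m+1) • tprod ℝ (fun _ : Fin (m+1) => u) := by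
      rw [MultilinearMap.map_smul_univ]; simp
    rw [e, map_smul, hs, one_smul]
  have hTeval : ∀ (f g : X →L[ℝ] ℝ), ‖f‖ ≤ 1 → ‖g‖ ≤ 1 → ∀ u v : X,
      |g u * (f u) ^ m - g v * (f v) ^ m| ≤
        ‖ι (tprod ℝ (fun _ : Fin (m+1) => u)) - ι (tprod ℝ (fun _ : Fin (m+1) => v))‖ := by
    intro f g hf hg u v
    set F : Fin (m+1) → (X →L[ℝ] ℝ) := Fin.cons g (fun _ => f) with hF
    have hprod : ∀ w : X, tensorEval F (tprod ℝ (fun _ : Fin (m+1) => w))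
        = g w * (f w) ^ m := by
      intro w
      have h1 : tensorEval F (tprod ℝ (fun _ : Fin (m+1) => w)) = ∏ i, F i w := by
        simp [tensorEval]
      rw [h1, Fin.prod_univ_succ]
      simp [hF]
    have hnF : (∏ i, ‖F i‖) ≤ 1 := by
      rw [Fin.prod_univ_succ]
      simp only [hF, Fin.cons_zero, Fin.cons_succ]
      have hp : ∏ _i : Fin m, ‖f‖ = ‖f‖ ^ m := by
        simp [Finset.prod_const]
      rw [hp]
      have h1 : ‖f‖ ^ m ≤ 1 := pow_le_one₀ (norm_nonneg f) hf
      have := mul_le_mul hg h1 (pow_nonneg (norm_nonneg f) m) zero_le_one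
      simpa using this
    have h := hdual' F (tprod ℝ (fun _ : Fin (m+1) => u) - tprod ℝ (fun _ : Fin (m+1) => v))
    rw [map_sub, map_sub, hprod, hprod] at h
    refine h.trans ?_
    rw [← map_sub]
    nlinarith [norm_nonneg (ι (tprod ℝ (fun _ : Fin (m+1) => u)
      - tprod ℝ (fun _ : Fin (m+1) => v)))]
  have hTcont : Continuous fun u : X => ι (tprod ℝ (fun _ : Fin (m+1) => u)) := by
    let M := MultilinearMap.mkContinuous (ι.compMultilinearMap (tprod ℝ)) 1
      (fun w => by simpa using hb w)
    have he : (fun u : X => ι (tprod ℝ (fun _ : Fin (m+1) => u))) =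
        fun u => M (fun _ : Fin (m+1) => u) := rfl
    rw [he]
    exact M.cont.comp (continuous_pi fun _ => continuous_id)
  constructor
  · exact keyLemma (fun u => ι (tprod ℝ (fun _ : Fin (m+1) => u)))
      hT1 hTsmul hTeval hTcont x z hconv
  · refine IsSeqClosed.isClosed ?_
    intro w e hw hwe
    choose g hg using hw
    obtain ⟨x₀, φ, _, _, hz⟩ := keyLemma (fun u => ι (tprod ℝ (fun _ : Fin (m+1) => u)))
      hT1 hTsmul hTeval hTcont g e (Tendsto.congr (fun n => (hg n)) hwe)
    exact ⟨x₀, hz⟩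
end

section
/- Let X be a Banach space, d ≥ 1, and let {x_n} be a sequence in X converging weakly to 0. Then the sequence of elementary tensors {x_n ⊗ ⋯ ⊗ x_n} converges weakly to 0 in the injective tensor product ⊗̂_ε^d X. -/
set_option linter.unusedSectionVars false
set_option linter.unusedVariables false
set_option maxHeartbeats 1000000


open scoped TensorProduct
open PiTensorProduct Filter

/-- The injective tensor norm on the `d`-fold algebraic tensor product. -/
noncomputable def injNorm {𝕜 : Type*} [RCLike 𝕜] {X : Type*} [NormedAddCommGroup X]
    [NormedSpace 𝕜 X] {d : ℕ} (z : ⨂[𝕜] (_ : Fin d), X) : ℝ :=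
  sSup {r | ∃ f : Fin d → (X →L[𝕜] 𝕜), (∀ i, ‖f i‖ ≤ 1) ∧ r = ‖tensorEval f z‖}


open Filter MeasureTheory TopologicalSpace Set
open scoped ENNReal NNReal

namespace DiagAux

variable {Q : Type*} [TopologicalSpace Q] [CompactSpace Q] [T2Space Q]

/-- The positive-part sup functional. -/
noncomputable def pos (μ : C(Q, ℝ) →L[ℝ] ℝ) (g : C(Q, ℝ)) : ℝ :=
  sSup {y | ∃ h : C(Q, ℝ), 0 ≤ h ∧ h ≤ g ∧ y = μ h}

variable (μ : C(Q, ℝ) →L[ℝ] ℝ) {g g' h : C(Q, ℝ)}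

lemma norm_le_of_le (h0 : 0 ≤ h) (hg : h ≤ g) : ‖h‖ ≤ ‖g‖ := by
  refine (ContinuousMap.norm_le _ (norm_nonneg g)).2 fun x => ?_
  have h1 : 0 ≤ h x := h0 x
  have h2 : h x ≤ g x := hg x
  have := ContinuousMap.norm_coe_le_norm g x
  simp only [Real.norm_eq_abs] at *
  rw [abs_of_nonneg h1]
  exact h2.trans ((le_abs_self _).trans this)

lemma cle {f g : C(Q, ℝ)} : f ≤ g ↔ ∀ x, f x ≤ g x := ContinuousMap.le_def

lemma mem_posSet_zero (hg : 0 ≤ g) : (0 : ℝ) ∈ {y | ∃ h : C(Q, ℝ), 0 ≤ h ∧ h ≤ g ∧ y = μ h} :=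
  ⟨0, le_refl _, hg, (map_zero μ).symm⟩

lemma posSet_bddAbove (hg : 0 ≤ g) :
    BddAbove {y | ∃ h : C(Q, ℝ), 0 ≤ h ∧ h ≤ g ∧ y = μ h} := by
  refine ⟨‖μ‖ * ‖g‖, fun y hy => ?_⟩
  obtain ⟨h, h0, hle, rfl⟩ := hy
  calc μ h ≤ |μ h| := le_abs_self _
    _ ≤ ‖μ‖ * ‖h‖ := μ.le_opNorm h
    _ ≤ ‖μ‖ * ‖g‖ := by gcongr; exact norm_le_of_le h0 hle

lemma le_pos (h0 : 0 ≤ h) (hle : h ≤ g) (hg : 0 ≤ g) : μ h ≤ pos μ g :=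
  le_csSup (posSet_bddAbove μ hg) ⟨h, h0, hle, rfl⟩

lemma pos_nonneg (hg : 0 ≤ g) : 0 ≤ pos μ g :=
  le_csSup (posSet_bddAbove μ hg) (mem_posSet_zero μ hg)

lemma pos_le (hg : 0 ≤ g) : pos μ g ≤ ‖μ‖ * ‖g‖ :=
  csSup_le ⟨0, mem_posSet_zero μ hg⟩ fun y hy => by
    obtain ⟨h, h0, hle, rfl⟩ := hy
    calc μ h ≤ |μ h| := le_abs_self _
      _ ≤ ‖μ‖ * ‖h‖ := μ.le_opNorm h
      _ ≤ ‖μ‖ * ‖g‖ := by gcongr; exact norm_le_of_le h0 hle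

lemma pos_mono (hg : 0 ≤ g) (hgg : g ≤ g') : pos μ g ≤ pos μ g' :=
  csSup_le ⟨0, mem_posSet_zero μ hg⟩ fun y hy => by
    obtain ⟨h, h0, hle, rfl⟩ := hy
    exact le_pos μ h0 (hle.trans hgg) (hg.trans hgg)

lemma pos_add (hg : 0 ≤ g) (hg' : 0 ≤ g') : pos μ (g + g') = pos μ g + pos μ g' := by
  have hgg' : 0 ≤ g + g' := by intro x; simpa using add_nonneg (hg x) (hg' x)
  apply le_antisymm
  · refine csSup_le ⟨0, mem_posSet_zero μ hgg'⟩ fun y hy => ?_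
    obtain ⟨h, h0, hle, rfl⟩ := hy
    have h1le : h ⊓ g ≤ g := inf_le_right
    have h10 : 0 ≤ h ⊓ g := le_inf h0 hg
    have h20 : 0 ≤ h - h ⊓ g := by
      intro x
      simp only [ContinuousMap.sub_apply, ContinuousMap.inf_apply, ContinuousMap.zero_apply]
      simp [inf_le_left.trans (le_refl (h x))]
    have h2le : h - h ⊓ g ≤ g' := by
      intro x
      simp only [ContinuousMap.sub_apply, ContinuousMap.inf_apply]
      rcases le_total (h x) (g x) with hc | hc
      · simpa [min_eq_left hc] using hg' x
      · have h3 := ContinuousMap.le_def.mp hle x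
        simp only [ContinuousMap.add_apply] at h3
        simp [min_eq_right hc]
        linarith
    have : μ h = μ (h ⊓ g) + μ (h - h ⊓ g) := by rw [← map_add]; ring_nf
    rw [this]
    exact add_le_add (le_pos μ h10 h1le hg) (le_pos μ h20 h2le hg')
  · have key : ∀ y ∈ {y | ∃ h : C(Q, ℝ), 0 ≤ h ∧ h ≤ g ∧ y = μ h},
        y + pos μ g' ≤ pos μ (g + g') := by
      rintro y ⟨h, h0, hle, rfl⟩
      have : pos μ g' ≤ pos μ (g + g') - μ h := by
        refine csSup_le ⟨0, mem_posSet_zero μ hg'⟩ ?_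
        rintro y' ⟨h', h0', hle', rfl⟩
        have hsum0 : 0 ≤ h + h' := fun x => by
          simpa using add_nonneg (h0 x) (h0' x)
        have hsumle : h + h' ≤ g + g' := fun x => by
          simpa using add_le_add (hle x) (hle' x)
        have := le_pos μ hsum0 hsumle hgg'
        rw [map_add] at this
        linarith
      linarith
    have := csSup_le ⟨0, mem_posSet_zero μ hg⟩ (fun y hy => by linarith [key y hy] :
      ∀ y ∈ {y | ∃ h : C(Q, ℝ), 0 ≤ h ∧ h ≤ g ∧ y = μ h}, y ≤ pos μ (g + g') - pos μ g')
    unfold pos at this ⊢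
    linarith

lemma pos_smul {c : ℝ} (hc : 0 < c) (hg : 0 ≤ g) : pos μ (c • g) = c * pos μ g := by
  have hcg : 0 ≤ c • g := fun x => by
    simpa using mul_nonneg hc.le (hg x)
  apply le_antisymm
  · refine csSup_le ⟨0, mem_posSet_zero μ hcg⟩ ?_
    rintro y ⟨h, h0, hle, rfl⟩
    have h0' : 0 ≤ c⁻¹ • h := fun x => by
      simpa using mul_nonneg (inv_nonneg.2 hc.le) (h0 x)
    have hle' : c⁻¹ • h ≤ g := cle.mpr fun x => by
      have := cle.mp hle x
      simp only [ContinuousMap.smul_apply, smul_eq_mul] at this ⊢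
      rw [inv_mul_le_iff₀ hc]
      linarith [this]
    have := le_pos μ h0' hle' hg
    have heq : μ h = c * μ (c⁻¹ • h) := by
      rw [μ.map_smul, smul_eq_mul, ← mul_assoc, mul_inv_cancel₀ hc.ne', one_mul]
    rw [heq]
    exact (mul_le_mul_iff_right₀ hc).2 this
  · rw [mul_comm, ← le_div_iff₀ hc]
    refine csSup_le ⟨0, mem_posSet_zero μ hg⟩ ?_
    rintro y ⟨h, h0, hle, rfl⟩
    have h0' : 0 ≤ c • h := fun x => by simpa using mul_nonneg hc.le (h0 x)
    have hle' : c • h ≤ c • g := cle.mpr fun x => by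
      have := cle.mp hle x
      simp only [ContinuousMap.smul_apply, smul_eq_mul]
      exact mul_le_mul_of_nonneg_left this hc.le
    have := le_pos μ h0' hle' hcg
    rw [μ.map_smul, smul_eq_mul] at this
    rw [le_div_iff₀ hc]
    linarith

/-- The dominating positive functional `r = 2 pos - μ`. -/
noncomputable def tv (g : C(Q, ℝ)) : ℝ := 2 * pos μ g - μ g

lemma tv_nonneg (hg : 0 ≤ g) : 0 ≤ tv μ g := by
  have h1 := le_pos μ hg le_rfl hg
  have h2 := pos_nonneg μ hg
  unfold tv; linarith

lemma tv_add (hg : 0 ≤ g) (hg' : 0 ≤ g') : tv μ (g + g') = tv μ g + tv μ g' := by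
  unfold tv; rw [pos_add μ hg hg', map_add]; ring

lemma tv_smul {c : ℝ} (hc : 0 < c) (hg : 0 ≤ g) : tv μ (c • g) = c * tv μ g := by
  unfold tv; rw [pos_smul μ hc hg, μ.map_smul, smul_eq_mul]; ring

lemma tv_mono (hg : 0 ≤ g) (hgg : g ≤ g') : tv μ g ≤ tv μ g' := by
  have h0 : 0 ≤ g' - g := cle.mpr fun x => by
    have := cle.mp hgg x
    simp only [ContinuousMap.sub_apply, ContinuousMap.zero_apply]
    linarith
  have heq : g' = g + (g' - g) := by ext x; simp
  have := tv_nonneg μ h0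
  rw [heq, tv_add μ hg h0]; linarith

lemma tv_le (hg : 0 ≤ g) : tv μ g ≤ 3 * ‖μ‖ * ‖g‖ := by
  have h1 := pos_le μ hg
  have habs : |μ g| ≤ ‖μ‖ * ‖g‖ := by
    simpa [Real.norm_eq_abs] using μ.le_opNorm g
  have h2 := (abs_le.1 habs).1
  unfold tv; linarith

lemma qpart_nonneg (hg : 0 ≤ g) : 0 ≤ pos μ g - μ g := by
  have := le_pos μ hg le_rfl hg; linarith

lemma qpart_mono (hg : 0 ≤ g) (hgg : g ≤ g') : pos μ g - μ g ≤ pos μ g' - μ g' := by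
  have h0 : 0 ≤ g' - g := cle.mpr fun x => by
    have := cle.mp hgg x
    simp only [ContinuousMap.sub_apply, ContinuousMap.zero_apply]
    linarith
  have heq : g' = g + (g' - g) := by ext x; simp
  have hq := qpart_nonneg μ h0
  rw [heq, pos_add μ hg h0, map_add]
  linarith

lemma abs_le_tv : |μ g| ≤ tv μ |g| := by
  have habs0 : 0 ≤ |g| := cle.mpr fun x => by
    simpa using abs_nonneg (g x)
  set gp : C(Q, ℝ) := g ⊔ 0 with hgp
  set gm : C(Q, ℝ) := (-g) ⊔ 0 with hgm
  have hp0 : 0 ≤ gp := cle.mpr fun x => by simp [hgp]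
  have hm0 : 0 ≤ gm := cle.mpr fun x => by simp [hgm]
  have hple : gp ≤ |g| := cle.mpr fun x => by
    simp only [hgp, ContinuousMap.sup_apply, ContinuousMap.zero_apply, ContinuousMap.abs_apply]
    exact sup_le (le_abs_self _) (abs_nonneg _)
  have hmle : gm ≤ |g| := cle.mpr fun x => by
    simp only [hgm, ContinuousMap.sup_apply, ContinuousMap.zero_apply, ContinuousMap.abs_apply,
      ContinuousMap.neg_apply]
    exact sup_le (neg_le_abs _) (abs_nonneg _)
  have hdecomp : μ g = μ gp - μ gm := by
    rw [← map_sub]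
    congr 1
    ext x
    simp only [hgp, hgm, ContinuousMap.sub_apply, ContinuousMap.sup_apply,
      ContinuousMap.neg_apply, ContinuousMap.zero_apply]
    rcases le_total (g x) 0 with hc | hc
    · rw [sup_eq_right.2 hc, sup_eq_left.2 (by linarith : (0:ℝ) ≤ -g x)]; ring
    · rw [sup_eq_left.2 hc, sup_eq_right.2 (by linarith : -g x ≤ (0:ℝ))]; ring
  have key : ∀ {u v : C(Q, ℝ)}, 0 ≤ u → 0 ≤ v → u ≤ |g| → v ≤ |g| →
      μ u - μ v ≤ tv μ |g| := by
    intro u v hu hv hule hvle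
    have h1 : μ u ≤ pos μ u := le_pos μ hu le_rfl hu
    have h2 : pos μ u ≤ pos μ |g| := pos_mono μ hu hule
    have h3 : pos μ v - μ v ≤ pos μ |g| - μ |g| := qpart_mono μ hv hvle
    have h4 : 0 ≤ pos μ v - μ v := qpart_nonneg μ hv
    have h5 : 0 ≤ pos μ v := pos_nonneg μ hv
    unfold tv
    linarith
  rw [abs_le]
  constructor
  · have := key hm0 hp0 hmle hple
    linarith [hdecomp, this]
  · have := key hp0 hm0 hple hmle
    linarith [hdecomp, this]

/-- Inner content associated to `tv μ`. -/
noncomputable def mC (μ : C(Q, ℝ) →L[ℝ] ℝ) (K : Compacts Q) : ℝ :=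
  sInf {y | ∃ h : C(Q, ℝ), 0 ≤ h ∧ (∀ x ∈ (K : Set Q), 1 ≤ h x) ∧ y = tv μ h}

lemma one_mem_mCSet (K : Compacts Q) :
    tv μ (1 : C(Q, ℝ)) ∈ {y | ∃ h : C(Q, ℝ), 0 ≤ h ∧ (∀ x ∈ (K : Set Q), 1 ≤ h x) ∧ y = tv μ h} :=
  ⟨1, cle.mpr fun x => by simp, fun x _ => by simp, rfl⟩

lemma mCSet_bddBelow (K : Compacts Q) :
    BddBelow {y | ∃ h : C(Q, ℝ), 0 ≤ h ∧ (∀ x ∈ (K : Set Q), 1 ≤ h x) ∧ y = tv μ h} := by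
  refine ⟨0, fun y hy => ?_⟩
  obtain ⟨h, h0, _, rfl⟩ := hy
  exact tv_nonneg μ h0

lemma mC_nonneg (K : Compacts Q) : 0 ≤ mC μ K :=
  le_csInf ⟨_, one_mem_mCSet μ K⟩ fun y hy => by
    obtain ⟨h, h0, _, rfl⟩ := hy; exact tv_nonneg μ h0

lemma mC_le (K : Compacts Q) {h : C(Q, ℝ)} (h0 : 0 ≤ h) (h1 : ∀ x ∈ (K : Set Q), 1 ≤ h x) :
    mC μ K ≤ tv μ h :=
  csInf_le (mCSet_bddBelow μ K) ⟨h, h0, h1, rfl⟩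

lemma le_mC (K : Compacts Q) {b : ℝ}
    (hb : ∀ h : C(Q, ℝ), 0 ≤ h → (∀ x ∈ (K : Set Q), 1 ≤ h x) → b ≤ tv μ h) :
    b ≤ mC μ K :=
  le_csInf ⟨_, one_mem_mCSet μ K⟩ fun y hy => by
    obtain ⟨h, h0, h1, rfl⟩ := hy; exact hb h h0 h1

lemma mC_mono {K₁ K₂ : Compacts Q} (hK : (K₁ : Set Q) ⊆ K₂) : mC μ K₁ ≤ mC μ K₂ :=
  le_csInf ⟨_, one_mem_mCSet μ K₂⟩ fun y hy => by
    obtain ⟨h, h0, h1, rfl⟩ := hy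
    exact mC_le μ K₁ h0 fun x hx => h1 x (hK hx)

lemma mC_sup_le (K₁ K₂ : Compacts Q) : mC μ (K₁ ⊔ K₂) ≤ mC μ K₁ + mC μ K₂ := by
  refine le_of_forall_pos_le_add fun ε hε => ?_
  obtain ⟨y₁, ⟨h₁, h₁0, h₁1, rfl⟩, hy₁⟩ :=
    Real.lt_sInf_add_pos ⟨_, one_mem_mCSet μ K₁⟩ (half_pos hε)
  obtain ⟨y₂, ⟨h₂, h₂0, h₂1, rfl⟩, hy₂⟩ :=
    Real.lt_sInf_add_pos ⟨_, one_mem_mCSet μ K₂⟩ (half_pos hε)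
  have hsum0 : 0 ≤ h₁ + h₂ := cle.mpr fun x => by
    simpa using add_nonneg (cle.mp h₁0 x) (cle.mp h₂0 x)
  have hsum1 : ∀ x ∈ ((K₁ ⊔ K₂ : Compacts Q) : Set Q), 1 ≤ (h₁ + h₂) x := by
    intro x hx
    rcases hx with hx | hx
    · simpa using le_add_of_le_of_nonneg (h₁1 x hx) (cle.mp h₂0 x)
    · simpa using le_add_of_nonneg_of_le (cle.mp h₁0 x) (h₂1 x hx)
  have := mC_le μ (K₁ ⊔ K₂) hsum0 hsum1
  rw [tv_add μ h₁0 h₂0] at this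
  change tv μ h₁ < mC μ K₁ + ε / 2 at hy₁
  change tv μ h₂ < mC μ K₂ + ε / 2 at hy₂
  linarith

lemma mC_sup_disjoint (K₁ K₂ : Compacts Q) (hd : Disjoint (K₁ : Set Q) K₂) :
    mC μ K₁ + mC μ K₂ ≤ mC μ (K₁ ⊔ K₂) := by
  obtain ⟨ψ, hψ0, hψ1, hψmem⟩ := exists_continuous_zero_one_of_isClosed
    K₂.isCompact.isClosed K₁.isCompact.isClosed hd.symm
  refine le_mC μ _ fun h h0 h1 => ?_
  set u₁ : C(Q, ℝ) := h * ψ with hu₁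
  set u₂ : C(Q, ℝ) := h * (1 - ψ) with hu₂
  have hmem0 : ∀ x, 0 ≤ ψ x := fun x => (hψmem x).1
  have hmem1 : ∀ x, ψ x ≤ 1 := fun x => (hψmem x).2
  have hu₁0 : 0 ≤ u₁ := cle.mpr fun x => by
    simpa [hu₁] using mul_nonneg (cle.mp h0 x) (hmem0 x)
  have hu₂0 : 0 ≤ u₂ := cle.mpr fun x => by
    simp only [hu₂, ContinuousMap.mul_apply, ContinuousMap.sub_apply, ContinuousMap.one_apply,
      ContinuousMap.zero_apply]
    exact mul_nonneg (cle.mp h0 x) (by linarith [hmem1 x])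
  have hu₁1 : ∀ x ∈ (K₁ : Set Q), 1 ≤ u₁ x := by
    intro x hx
    have : ψ x = 1 := hψ1 hx
    have hhx : 1 ≤ h x := h1 x (Set.mem_union_left _ hx)
    simp [hu₁, this, hhx]
  have hu₂1 : ∀ x ∈ (K₂ : Set Q), 1 ≤ u₂ x := by
    intro x hx
    have : ψ x = 0 := hψ0 hx
    have hhx : 1 ≤ h x := h1 x (Set.mem_union_right _ hx)
    simp [hu₂, this, hhx]
  have hsum : u₁ + u₂ = h := by
    ext x; simp [hu₁, hu₂]; ring
  have := tv_add μ hu₁0 hu₂0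
  rw [hsum] at this
  rw [this]
  exact add_le_add (mC_le μ K₁ hu₁0 hu₁1) (mC_le μ K₂ hu₂0 hu₂1)

/-- The content on compact subsets of `Q` built from `tv μ`. -/
noncomputable def toContent (μ : C(Q, ℝ) →L[ℝ] ℝ) : Content Q where
  toFun K := (mC μ K).toNNReal
  mono' K₁ K₂ h := Real.toNNReal_mono (mC_mono μ h)
  sup_disjoint' K₁ K₂ hd _ _ := by
    have heq : mC μ (K₁ ⊔ K₂) = mC μ K₁ + mC μ K₂ :=
      le_antisymm (mC_sup_le μ K₁ K₂) (mC_sup_disjoint μ K₁ K₂ hd)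
    show (mC μ (K₁ ⊔ K₂)).toNNReal = (mC μ K₁).toNNReal + (mC μ K₂).toNNReal
    rw [heq, Real.toNNReal_add (mC_nonneg μ K₁) (mC_nonneg μ K₂)]
  sup_le' K₁ K₂ := by
    refine le_trans (Real.toNNReal_mono (mC_sup_le μ K₁ K₂)) ?_
    exact Real.toNNReal_add_le

/-- Grothendieck-type lemma: bounded pointwise-null sequences in `C(Q, ℝ)`, `Q` compact
Hausdorff, are weakly null. -/
theorem tendsto_of_forall_tendsto (μ : C(Q, ℝ) →L[ℝ] ℝ) (g : ℕ → C(Q, ℝ)) (C : ℝ)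
    (hb : ∀ n, ‖g n‖ ≤ C) (hp : ∀ x, Tendsto (fun n => g n x) atTop (nhds 0)) :
    Tendsto (fun n => μ (g n)) atTop (nhds 0) := by
  rw [NormedAddCommGroup.tendsto_nhds_zero]
  by_contra hcon
  push_neg at hcon
  obtain ⟨δ, hδ, hfreq⟩ := hcon
  have hfreq' : ∃ᶠ n in atTop, δ ≤ ‖μ (g n)‖ := hfreq
  obtain ⟨φ, hφmono, hφ⟩ := extraction_of_frequently_atTop hfreq'
  -- setup constants
  set C' : ℝ := max C 1 with hC'
  have hC'pos : 0 < C' := lt_of_lt_of_le one_pos (le_max_right _ _)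
  set R : ℝ := tv μ (1 : C(Q, ℝ)) with hR
  have hRnn : 0 ≤ R := tv_nonneg μ (cle.mpr fun x => by simp)
  set t : ℝ := δ / (2 * (R + 1)) with ht
  have htpos : 0 < t := div_pos hδ (by linarith)
  have htR : t * R ≤ δ / 2 := by
    rw [ht, div_mul_eq_mul_div, div_le_div_iff₀ (by linarith) (by norm_num)]
    nlinarith
  set β : ℝ := δ / (2 * C') with hβ
  have hβpos : 0 < β := div_pos hδ (by linarith)
  -- the closed sets
  have hFclosed : ∀ k, IsClosed {x : Q | t ≤ |g (φ k) x|} := fun k =>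
    isClosed_le continuous_const ((map_continuous (g (φ k))).abs)
  set F : ℕ → Compacts Q := fun k => ⟨{x : Q | t ≤ |g (φ k) x|}, (hFclosed k).isCompact⟩ with hF
  -- mass lower bound
  have hmass : ∀ k, β ≤ mC μ (F k) := by
    intro k
    have hseq : δ ≤ tv μ |g (φ k)| := by
      calc δ ≤ ‖μ (g (φ k))‖ := hφ k
        _ = |μ (g (φ k))| := Real.norm_eq_abs _
        _ ≤ tv μ |g (φ k)| := abs_le_tv μ
    refine le_mC μ _ fun h h0 h1 => ?_
    have hdom : |g (φ k)| ≤ t • (1 : C(Q, ℝ)) + C' • h := by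
      refine cle.mpr fun x => ?_
      simp only [ContinuousMap.add_apply, ContinuousMap.smul_apply, ContinuousMap.one_apply,
        ContinuousMap.abs_apply, smul_eq_mul, mul_one]
      rcases le_total (|g (φ k) x|) t with hc | hc
      · have := mul_nonneg hC'pos.le (cle.mp h0 x)
        linarith
      · have hx1 : 1 ≤ h x := h1 x hc
        have hbd : |g (φ k) x| ≤ C' := by
          have h2 := ContinuousMap.norm_coe_le_norm (g (φ k)) x
          have h3 := hb (φ k)
          simp only [Real.norm_eq_abs] at h2
          calc |g (φ k) x| ≤ C := h2.trans h3
            _ ≤ C' := le_max_left _ _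
        nlinarith [cle.mp h0 x]
    have habs0 : (0 : C(Q, ℝ)) ≤ |g (φ k)| := cle.mpr fun x => by
      simpa using abs_nonneg (g (φ k) x)
    have ht10 : (0 : C(Q, ℝ)) ≤ t • (1 : C(Q, ℝ)) := cle.mpr fun x => by
      simpa using htpos.le
    have hCh0 : (0 : C(Q, ℝ)) ≤ C' • h := cle.mpr fun x => by
      simpa using mul_nonneg hC'pos.le (cle.mp h0 x)
    have hchain : δ ≤ t * R + C' * tv μ h := by
      have h4 := tv_mono μ habs0 hdom
      rw [tv_add μ ht10 hCh0, tv_smul μ htpos (cle.mpr fun x => by simp),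
        tv_smul μ hC'pos h0] at h4
      linarith
    have h5 : δ / 2 ≤ C' * tv μ h := by linarith
    rw [hβ, div_le_iff₀ (by linarith)]
    linarith
  -- build the measure
  borelize Q
  set ν : Measure Q := (toContent μ).measure with hν
  have hFmeas : ∀ k, MeasurableSet (F k : Set Q) := fun k => (hFclosed k).measurableSet
  have hνF : ∀ k, ENNReal.ofReal β ≤ ν (F k : Set Q) := by
    intro k
    rw [hν, Content.measure_apply _ (hFmeas k)]
    refine le_trans ?_ ((toContent μ).le_outerMeasure_compacts (F k))
    exact ENNReal.ofReal_le_ofReal (hmass k)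
  have hνfin : ν Set.univ ≠ ⊤ := by
    rw [hν, Content.measure_apply _ MeasurableSet.univ]
    refine ne_top_of_le_ne_top ?_ ((toContent μ).outerMeasure_le
      ⟨Set.univ, isOpen_univ⟩ ⟨Set.univ, isCompact_univ⟩ (le_refl _))
    exact ENNReal.coe_ne_top
  set G : ℕ → Set Q := fun N => ⋃ (k : ℕ) (_ : N ≤ k), (F k : Set Q) with hG
  have hGmeas : ∀ N, MeasurableSet (G N) :=
    fun N => MeasurableSet.iUnion fun k => MeasurableSet.iUnion fun _ => hFmeas k
  have hGanti : Antitone G := fun N M hNM => by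
    refine Set.iUnion₂_subset fun k hk => ?_
    exact Set.subset_iUnion₂ (s := fun k _ => (F k : Set Q)) k (hNM.trans hk)
  have hνG : ∀ N, ENNReal.ofReal β ≤ ν (G N) := fun N =>
    (hνF N).trans (measure_mono (Set.subset_iUnion₂ (s := fun k _ => (F k : Set Q)) N le_rfl))
  have hiInter : ν (⋂ N, G N) = ⨅ N, ν (G N) :=
    hGanti.measure_iInter (fun N => (hGmeas N).nullMeasurableSet)
      ⟨0, ne_top_of_le_ne_top hνfin (measure_mono (Set.subset_univ _))⟩
  have hnonempty : (⋂ N, G N).Nonempty := by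
    rw [Set.nonempty_iff_ne_empty]
    intro hemp
    have : (0 : ℝ≥0∞) = ⨅ N, ν (G N) := by
      rw [← hiInter, hemp, measure_empty]
    have h2 : ENNReal.ofReal β ≤ 0 := by
      rw [this]
      exact le_iInf hνG
    simp only [nonpos_iff_eq_zero, ENNReal.ofReal_eq_zero] at h2
    linarith
  obtain ⟨x, hx⟩ := hnonempty
  simp only [Set.mem_iInter] at hx
  have hev : ∀ᶠ n in atTop, |g n x| < t := by
    have := (hp x).abs
    simp only [abs_zero] at this
    exact this.eventually_lt_const htpos
  obtain ⟨N₀, hN₀⟩ := Filter.eventually_atTop.1 hev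
  have hxG := hx N₀
  simp only [hG, Set.mem_iUnion] at hxG
  obtain ⟨k, hk, hxF⟩ := hxG
  have : t ≤ |g (φ k) x| := hxF
  have hφk : N₀ ≤ φ k := hk.trans (hφmono.le_apply)
  exact absurd (hN₀ (φ k) hφk) (not_lt.2 this)

section Tensor

open scoped TensorProduct
open PiTensorProduct

variable {X : Type*} [NormedAddCommGroup X] [NormedSpace ℝ X] {d : ℕ}

/-- The closed unit ball of the dual with the weak-star topology. -/
abbrev Ball (X : Type*) [NormedAddCommGroup X] [NormedSpace ℝ X] : Set (WeakDual ℝ X) :=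
  (WeakDual.toStrongDual : WeakDual ℝ X → StrongDual ℝ X) ⁻¹' Metric.closedBall 0 1

instance : CompactSpace (Ball X) :=
  isCompact_iff_compactSpace.1 (WeakDual.isCompact_closedBall (𝕜 := ℝ) (0 : StrongDual ℝ X) 1)

lemma ball_norm_le (f : Ball X) : ‖WeakDual.toStrongDual f.1‖ ≤ 1 := by
  have h := f.2
  rw [Set.mem_preimage, Metric.mem_closedBall, dist_zero_right] at h
  exact h

lemma mem_ball_of_norm {φ : X →L[ℝ] ℝ} (h : ‖φ‖ ≤ 1) :
    (WeakDual.toStrongDual.symm φ : WeakDual ℝ X) ∈ Ball X := by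
  rw [Set.mem_preimage, Metric.mem_closedBall, dist_zero_right]
  exact h

lemma tensorEval_tprod (f : Fin d → (X →L[ℝ] ℝ)) (y : Fin d → X) :
    tensorEval f (tprod ℝ y) = ∏ i, f i (y i) := by
  simp [tensorEval]

lemma continuous_evalCM (z : ⨂[ℝ] (_ : Fin d), X) :
    Continuous fun f : Fin d → Ball X =>
      tensorEval (fun i => WeakDual.toStrongDual ((f i).1)) z := by
  induction z using PiTensorProduct.induction_on' with
  | tprodCoeff r y =>
    have : (fun f : Fin d → Ball X =>
        tensorEval (fun i => WeakDual.toStrongDual ((f i).1)) (tprodCoeff ℝ r y)) =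
        fun f => r * ∏ i, ((f i).1 : WeakDual ℝ X) (y i) := by
      funext f
      rw [tprodCoeff_eq_smul_tprod, _root_.map_smul, tensorEval_tprod]
      simp
    rw [this]
    refine continuous_const.mul ?_
    refine continuous_finset_prod _ fun i _ => ?_
    exact (WeakDual.eval_continuous (y i)).comp
      ((continuous_subtype_val).comp (continuous_apply i))
  | add u v hu hv =>
    have : (fun f : Fin d → Ball X =>
        tensorEval (fun i => WeakDual.toStrongDual ((f i).1)) (u + v)) =
        (fun f => tensorEval (fun i => WeakDual.toStrongDual ((f i).1)) u) +
        (fun f => tensorEval (fun i => WeakDual.toStrongDual ((f i).1)) v) := by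
      funext f; simp [map_add]
    rw [this]
    exact hu.add hv

/-- The canonical embedding of the algebraic tensor product into `C((B_{X^*})^d, ℝ)`. -/
noncomputable def TL : (⨂[ℝ] (_ : Fin d), X) →ₗ[ℝ] C(Fin d → Ball X, ℝ) where
  toFun z := ⟨fun f => tensorEval (fun i => WeakDual.toStrongDual ((f i).1)) z,
    continuous_evalCM z⟩
  map_add' u v := by ext f; simp [map_add]
  map_smul' c u := by ext f; simp

lemma TL_apply (z : ⨂[ℝ] (_ : Fin d), X) (f : Fin d → Ball X) :
    TL z f = tensorEval (fun i => WeakDual.toStrongDual ((f i).1)) z := rfl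

lemma injNorm_eq_norm_TL (z : ⨂[ℝ] (_ : Fin d), X) : injNorm z = ‖TL z‖ := by
  have hmem0 : ‖tensorEval (fun _ : Fin d => (0 : X →L[ℝ] ℝ)) z‖ ∈
      {r | ∃ f : Fin d → (X →L[ℝ] ℝ), (∀ i, ‖f i‖ ≤ 1) ∧ r = ‖tensorEval f z‖} :=
    ⟨fun _ => 0, fun i => by simp, rfl⟩
  have hbdd : BddAbove {r | ∃ f : Fin d → (X →L[ℝ] ℝ), (∀ i, ‖f i‖ ≤ 1) ∧
      r = ‖tensorEval f z‖} := by
    refine ⟨‖TL z‖, fun r hr => ?_⟩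
    obtain ⟨f, hf, rfl⟩ := hr
    have : tensorEval f z = TL z (fun i => ⟨WeakDual.toStrongDual.symm (f i),
        mem_ball_of_norm (hf i)⟩) := by
      rw [TL_apply]
      congr 1
    rw [this]
    exact ContinuousMap.norm_coe_le_norm (TL z) _
  unfold injNorm
  apply le_antisymm
  · refine csSup_le ⟨_, hmem0⟩ fun r hr => ?_
    obtain ⟨f, hf, rfl⟩ := hr
    have : tensorEval f z = TL z (fun i => ⟨WeakDual.toStrongDual.symm (f i),
        mem_ball_of_norm (hf i)⟩) := by
      rw [TL_apply]
      congr 1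
    rw [this]
    exact ContinuousMap.norm_coe_le_norm (TL z) _
  · have hnn : 0 ≤ sSup {r | ∃ f : Fin d → (X →L[ℝ] ℝ), (∀ i, ‖f i‖ ≤ 1) ∧
        r = ‖tensorEval f z‖} :=
      le_trans (norm_nonneg _) (le_csSup hbdd hmem0)
    refine (ContinuousMap.norm_le _ hnn).2 fun f => ?_
    refine le_csSup hbdd ?_
    exact ⟨fun i => WeakDual.toStrongDual ((f i).1), fun i => ball_norm_le (f i), rfl⟩

lemma exists_functional {E : Type*} [NormedAddCommGroup E] [NormedSpace ℝ E]
    (ι : (⨂[ℝ] (_ : Fin d), X) →ₗ[ℝ] E)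
    (hιiso : ∀ z, ‖ι z‖ = injNorm z) (F : E →L[ℝ] ℝ) :
    ∃ μ : C(Fin d → Ball X, ℝ) →L[ℝ] ℝ, ∀ z, μ (TL z) = F (ι z) := by
  classical
  set Glin : (⨂[ℝ] (_ : Fin d), X) →ₗ[ℝ] ℝ := F.toLinearMap.comp ι with hGlin
  have hker : LinearMap.ker (TL (X := X) (d := d)) ≤ LinearMap.ker Glin := by
    intro z hz
    rw [LinearMap.mem_ker] at hz ⊢
    have h1 : injNorm z = 0 := by rw [injNorm_eq_norm_TL, hz, norm_zero]
    have h2 : ι z = 0 := by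
      have : ‖ι z‖ = 0 := by rw [hιiso, h1]
      exact norm_eq_zero.1 this
    simp [hGlin, h2]
  set ψ0 : LinearMap.range (TL (X := X) (d := d)) →ₗ[ℝ] ℝ :=
    (Submodule.liftQ (LinearMap.ker (TL (X := X) (d := d))) Glin hker).comp
      ((TL (X := X) (d := d)).quotKerEquivRange.symm.toLinearMap) with hψ0
  have hkey : ∀ z : (⨂[ℝ] (_ : Fin d), X),
      ψ0 ⟨TL z, LinearMap.mem_range_self _ z⟩ = F (ι z) := by
    intro z
    have h1 : (TL (X := X) (d := d)).quotKerEquivRange (Submodule.Quotient.mk z) =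
        ⟨TL z, LinearMap.mem_range_self _ z⟩ := by
      apply Subtype.ext
      exact LinearMap.quotKerEquivRange_apply_mk (TL (X := X) (d := d)) z
    have h2 : (TL (X := X) (d := d)).quotKerEquivRange.symm
        ⟨TL z, LinearMap.mem_range_self _ z⟩ = Submodule.Quotient.mk z := by
      rw [← h1, LinearEquiv.symm_apply_apply]
    rw [hψ0]
    simp only [LinearMap.comp_apply, LinearEquiv.coe_toLinearMap, h2, Submodule.liftQ_apply]
    rfl
  have hbound : ∀ m : LinearMap.range (TL (X := X) (d := d)), ‖ψ0 m‖ ≤ ‖F‖ * ‖m‖ := by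
    rintro ⟨m, hm⟩
    obtain ⟨z, rfl⟩ := hm
    rw [hkey z]
    calc ‖F (ι z)‖ ≤ ‖F‖ * ‖ι z‖ := F.le_opNorm _
      _ = ‖F‖ * ‖TL z‖ := by rw [hιiso, injNorm_eq_norm_TL]
      _ = ‖F‖ * ‖(⟨TL z, LinearMap.mem_range_self _ z⟩ :
          LinearMap.range (TL (X := X) (d := d)))‖ := rfl
  set ψ : LinearMap.range (TL (X := X) (d := d)) →L[ℝ] ℝ :=
    LinearMap.mkContinuous ψ0 ‖F‖ hbound with hψ
  obtain ⟨μ, hext, _⟩ := exists_extension_norm_eq (LinearMap.range (TL (X := X) (d := d))) ψ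
  refine ⟨μ, fun z => ?_⟩
  have := hext ⟨TL z, LinearMap.mem_range_self _ z⟩
  rw [this]
  show ψ0 _ = _
  exact hkey z

lemma norm_bound [CompleteSpace X] (x : ℕ → X)
    (hweak : ∀ f : X →L[ℝ] ℝ, Tendsto (fun n => f (x n)) atTop (nhds 0)) :
    ∃ M : ℝ, 0 ≤ M ∧ ∀ n, ‖x n‖ ≤ M := by
  have h : ∀ φ : X →L[ℝ] ℝ, ∃ C, ∀ n,
      ‖(NormedSpace.inclusionInDoubleDual ℝ X (x n)) φ‖ ≤ C := by
    intro φ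
    have hb : BddAbove (Set.range fun n => ‖φ (x n)‖) := by
      have ht : Tendsto (fun n => ‖φ (x n)‖) atTop (nhds 0) := by
        simpa using (hweak φ).norm
      exact ht.bddAbove_range
    obtain ⟨C, hC⟩ := hb
    refine ⟨C, fun n => ?_⟩
    rw [NormedSpace.dual_def]
    exact hC (Set.mem_range_self n)
  obtain ⟨C', hC'⟩ := banach_steinhaus h
  refine ⟨max C' 0, le_max_right _ _, fun n => ?_⟩
  have : ‖x n‖ = ‖NormedSpace.inclusionInDoubleDual ℝ X (x n)‖ :=
    ((NormedSpace.inclusionInDoubleDualLi ℝ (E := X)).norm_map (x n)).symm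
  rw [this]
  exact le_trans (hC' n) (le_max_left _ _)

end Tensor

end DiagAux

/-- if `x_n ⇀ 0` weakly in `X`, then `x_n ⊗ ⋯ ⊗ x_n ⇀ 0` weakly in the
injective tensor product `⊗̂_ε^d X` (modelled as a Banach space `E` with a dense isometric
linear embedding `ι` of the algebraic tensor product with the injective norm `ε`). -/
theorem diag_tensor_weak_convergence {X : Type*} [NormedAddCommGroup X] [NormedSpace ℝ X]
    [CompleteSpace X] {d : ℕ} (hd : 1 ≤ d)
    {E : Type*} [NormedAddCommGroup E] [NormedSpace ℝ E] [CompleteSpace E]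
    (ι : (⨂[ℝ] (_ : Fin d), X) →ₗ[ℝ] E)
    (hιiso : ∀ z, ‖ι z‖ = injNorm z) (hιdense : Dense (Set.range ι))
    (x : ℕ → X)
    (hweak : ∀ f : X →L[ℝ] ℝ, Tendsto (fun n => f (x n)) atTop (nhds 0)) :
    ∀ F : E →L[ℝ] ℝ,
      Tendsto (fun n => F (ι (tprod ℝ (fun _ : Fin d => x n)))) atTop (nhds 0) := by
  classical
  intro F
  obtain ⟨μ, hμ⟩ := DiagAux.exists_functional ι hιiso F
  obtain ⟨M, hM0, hMb⟩ := DiagAux.norm_bound x hweak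
  set g : ℕ → C(Fin d → DiagAux.Ball X, ℝ) :=
    fun n => DiagAux.TL (tprod ℝ (fun _ : Fin d => x n)) with hg
  have hgapply : ∀ n (f : Fin d → DiagAux.Ball X),
      g n f = ∏ i, (WeakDual.toStrongDual ((f i).1)) (x n) := by
    intro n f
    rw [hg]
    rw [DiagAux.TL_apply, DiagAux.tensorEval_tprod]
  have hb : ∀ n, ‖g n‖ ≤ M ^ d := by
    intro n
    refine (ContinuousMap.norm_le _ (pow_nonneg hM0 d)).2 fun f => ?_
    rw [hgapply n f]
    rw [Real.norm_eq_abs, Finset.abs_prod]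
    calc (∏ i, |(WeakDual.toStrongDual ((f i).1)) (x n)|)
        ≤ ∏ _i : Fin d, M := by
          refine Finset.prod_le_prod (fun i _ => abs_nonneg _) fun i _ => ?_
          have h1 : ‖(WeakDual.toStrongDual ((f i).1)) (x n)‖ ≤
              ‖WeakDual.toStrongDual ((f i).1)‖ * ‖x n‖ :=
            (WeakDual.toStrongDual ((f i).1)).le_opNorm _
          have h2 := DiagAux.ball_norm_le (f i)
          have h3 := hMb n
          rw [Real.norm_eq_abs] at h1
          nlinarith [norm_nonneg (x n), abs_nonneg ((WeakDual.toStrongDual ((f i).1)) (x n))]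
      _ = M ^ d := by
          rw [Finset.prod_const, Finset.card_univ, Fintype.card_fin]
  have hp : ∀ f : Fin d → DiagAux.Ball X, Tendsto (fun n => g n f) atTop (nhds 0) := by
    intro f
    have := tendsto_finset_prod (f := fun (i : Fin d) (n : ℕ) =>
      (WeakDual.toStrongDual ((f i).1)) (x n)) (x := atTop) (a := fun _ => (0 : ℝ))
      Finset.univ (fun i _ => hweak _)
    have hzero : (∏ _i : Fin d, (0 : ℝ)) = 0 := by
      rw [Finset.prod_const, Finset.card_univ, Fintype.card_fin]
      exact zero_pow (by omega)
    rw [hzero] at this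
    refine Tendsto.congr (fun n => ?_) this
    rw [hgapply n f]
  have hconv := DiagAux.tendsto_of_forall_tendsto μ g (M ^ d) hb hp
  refine Tendsto.congr (fun n => ?_) hconv
  rw [hg]
  exact hμ _
end

section
/- Let X be a Banach space, d ≥ 1, and α a reasonable cross norm on ⊗^d X. Then the Veronese cone (𝕍^d_X, d_α), where 𝕍^d_X := {x ⊗ ⋯ ⊗ x : x ∈ X} with the metric induced by the norm of ⊗̂_α^d X, is a complete metric space. -/
open scoped TensorProduct
open PiTensorProduct

open Filter

/-!
Write `φ x = x ⊗ ⋯ ⊗ x`. Pairing `φ x - φ y` with the functionals `f ⊗ g ⊗ ⋯ ⊗ g`, where `g`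
norms `x`, shows that `φ` is injective up to sign in a quantitative way: for some `s` with
`s ^ d = 1`, `‖x - s • y‖ * min ‖x‖ ‖y‖ ^ (d - 1) ≤ 2 * α (φ x - φ y)`. So if `φ xₖ` converges to
a nonzero limit, the `xₖ` stay away from `0`, and after flipping signs so that all of them lie
close to one fixed `x_K` they form a Cauchy sequence in `X`, whose limit `x` has `φ x = lim φ xₖ`
by continuity of `φ`. Hence the cone is closed in the Banach space `E`.
-/

theorem eq_one_or_eq_neg_one_of_pow_eq_one {R : Type*} [Ring R] [LinearOrder R]
    [IsStrictOrderedRing R] {s : R} {n : ℕ} (hn : n ≠ 0) (hs : s ^ n = 1) : s = 1 ∨ s = -1 :=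
  ((pow_eq_one_iff_of_ne_zero hn).1 hs).imp_right And.left

theorem le_norm_add_of_norm_sub_le {X : Type*} [NormedAddCommGroup X] [NormedSpace ℝ X]
    {a b w : X} (ha : ‖w - a‖ ≤ ‖w‖ / 2) (hb : ‖w - b‖ ≤ ‖w‖ / 2) :
    ‖w‖ ≤ ‖a + b‖ := by
  have h2w : (2 : ℝ) • w = (a + b) + (w - a) + (w - b) := by module
  have := norm_add₃_le (a := a + b) (b := w - a) (c := w - b)
  rw [← h2w, norm_smul, Real.norm_two] at this
  linarith

theorem cauchySeq_of_forall_sub_or_add_lt {X : Type*} [NormedAddCommGroup X]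
    [NormedSpace ℝ X] {z : ℕ → X} {w : X} (hw : w ≠ 0)
    (hzw : ∀ᶠ k in atTop, ‖w - z k‖ ≤ ‖w‖ / 2)
    (hz : ∀ η > 0, ∃ M, ∀ m ≥ M, ∀ k ≥ M, ‖z m - z k‖ < η ∨ ‖z m + z k‖ < η) :
    CauchySeq z := by
  refine Metric.cauchySeq_iff.2 fun η hη => ?_
  obtain ⟨K, hK⟩ := eventually_atTop.1 hzw
  obtain ⟨M, hM⟩ := hz (min η ‖w‖) (by positivity)
  refine ⟨max K M, fun m hm k hk => ?_⟩
  rw [ge_iff_le, max_le_iff] at hm hk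
  rcases hM m hm.2 k hk.2 with h | h
  · exact dist_eq_norm (z m) (z k) ▸ h.trans_le (min_le_left _ _)
  · exact absurd (le_norm_add_of_norm_sub_le (hK m hm.1) (hK k hk.1))
      (h.trans_le (min_le_right _ _)).not_ge

theorem tprod_const_smul {R M : Type*} [CommSemiring R] [AddCommMonoid M] [Module R M]
    {m : ℕ} (s : R) (x : M) :
    (tprod R fun _ : Fin m => s • x) = s ^ m • tprod R fun _ : Fin m => x := by
  simpa using MultilinearMap.map_smul_univ (tprod R) (fun _ => s) fun _ : Fin m => x

theorem IsNorm.apply_sub_rev {𝕜 T : Type*} [RCLike 𝕜] [AddCommGroup T] [Module 𝕜 T]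
    {N : T → ℝ} (hN : IsNorm 𝕜 N) (z w : T) : N (z - w) = N (w - z) := by
  simpa using (hN.2.1 (-1) (z - w)).symm

section TensorEval

variable {𝕜 X : Type*} [RCLike 𝕜] [NormedAddCommGroup X] [NormedSpace 𝕜 X]

theorem tensorEval_tprod {d : ℕ} (f : Fin d → (X →L[𝕜] 𝕜)) (x : Fin d → X) :
    tensorEval f (tprod 𝕜 x) = ∏ i, f i (x i) := by
  simp [tensorEval]

theorem tensorEval_cons_tprod_const {n : ℕ} (f g : X →L[𝕜] 𝕜) (x : X) :
    tensorEval (Fin.cons f fun _ => g) (tprod 𝕜 fun _ : Fin (n + 1) => x) = f x * g x ^ n := by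
  simp [tensorEval_tprod, Fin.prod_univ_succ]

end TensorEval

namespace IsReasonableCrossNorm

section RCLike

variable {𝕜 X : Type*} [RCLike 𝕜] [NormedAddCommGroup X] [NormedSpace 𝕜 X]

theorem continuous_comp_tprod_const {d : ℕ} {N : (⨂[𝕜] (_ : Fin d), X) → ℝ}
    (hN : IsReasonableCrossNorm N) {E : Type*} [NormedAddCommGroup E] [NormedSpace 𝕜 E]
    (ι : (⨂[𝕜] (_ : Fin d), X) →ₗ[𝕜] E) (hι : ∀ z, ‖ι z‖ = N z) :
    Continuous fun x : X => ι (tprod 𝕜 fun _ : Fin d => x) :=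
  ((ι.compMultilinearMap (tprod 𝕜)).continuous_of_bound 1 fun v => by
    simpa [hι] using hN.2.1 v).comp (continuous_pi fun _ => continuous_id)

theorem norm_mul_pow_sub_le {n : ℕ} {N : (⨂[𝕜] (_ : Fin (n + 1)), X) → ℝ}
    (hN : IsReasonableCrossNorm N) (f g : X →L[𝕜] 𝕜) (x y : X) :
    ‖f x * g x ^ n - f y * g y ^ n‖ ≤
      ‖f‖ * ‖g‖ ^ n * N ((tprod 𝕜 fun _ => x) - tprod 𝕜 fun _ => y) := by
  have h := hN.2.2 (Fin.cons f fun _ => g) ((tprod 𝕜 fun _ => x) - tprod 𝕜 fun _ => y)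
  simpa [map_sub, tensorEval_cons_tprod_const, Fin.prod_univ_succ] using h

end RCLike

section Real

variable {X : Type*} [NormedAddCommGroup X] [NormedSpace ℝ X] {n : ℕ}
  {N : (⨂[ℝ] (_ : Fin (n + 1)), X) → ℝ}

/- With `g` a norming functional of `x` and `t = g y`, pairing with `f ⊗ g ⊗ ⋯ ⊗ g` controls
`f x * ‖x‖ ^ n - f y * t ^ n`, and the case `f = g` controls `‖x‖ ^ n - |t| ^ n`; `s` is the
sign of `t ^ n`. -/
theorem exists_pow_eq_one_norm_sub_smul_mul_pow_le (hN : IsReasonableCrossNorm N) {x y : X}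
    (hyx : ‖y‖ ≤ ‖x‖) :
    ∃ s : ℝ, s ^ (n + 1) = 1 ∧
      ‖x - s • y‖ * ‖x‖ ^ n ≤ 2 * N ((tprod ℝ fun _ => x) - tprod ℝ fun _ => y) := by
  set ε := N ((tprod ℝ fun _ => x) - tprod ℝ fun _ => y)
  rcases eq_or_ne x 0 with rfl | hx
  · obtain rfl : y = 0 := norm_le_zero_iff.mp (by simpa using hyx)
    exact ⟨1, one_pow _, by simp [ε, (hN.1.1 0).2 rfl]⟩
  obtain ⟨g, hg, hgx⟩ := exists_dual_vector ℝ x (norm_ne_zero_iff.2 hx)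
  set t := g y
  have hC (f : X →L[ℝ] ℝ) : |f x * ‖x‖ ^ n - f y * t ^ n| ≤ ‖f‖ * ε := by
    simpa [hg, hgx] using hN.norm_mul_pow_sub_le f g x y
  have ht : |t| ≤ ‖x‖ := by simpa [hg] using (g.le_opNorm y).trans (by simpa [hg] using hyx)
  have htn : |t| ^ n ≤ ‖x‖ ^ n := pow_le_pow_left₀ (abs_nonneg t) ht n
  have hB : ‖x‖ * (‖x‖ ^ n - |t| ^ n) ≤ ε := by
    have hA : ‖x‖ * ‖x‖ ^ n - t * t ^ n ≤ ε := by
      simpa [hg, hgx] using (le_abs_self _).trans (hC g)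
    have hpow : t * t ^ n ≤ |t| * |t| ^ n := by
      rw [← pow_succ', ← pow_succ', ← abs_pow]
      exact le_abs_self _
    nlinarith [mul_le_mul_of_nonneg_right ht (pow_nonneg (abs_nonneg t) n)]
  obtain ⟨σ, hσ, htσ⟩ : ∃ σ : ℝ, (σ = 1 ∨ σ = -1) ∧ t = σ * |t| := by
    rcases le_total 0 t with h | h
    · exact ⟨1, .inl rfl, by rw [one_mul, abs_of_nonneg h]⟩
    · exact ⟨-1, .inr rfl, by rw [abs_of_nonpos h]; ring⟩
  have hσn : |σ ^ n| = 1 := by rcases hσ with rfl | rfl <;> simp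
  refine ⟨σ ^ n, ?_, ?_⟩
  · rw [← pow_mul]
    rcases hσ with rfl | rfl
    · exact one_pow _
    · exact (Nat.even_mul_succ_self n).neg_one_pow
  have hdual : ‖‖x‖ ^ n • (x - σ ^ n • y)‖ ≤ 2 * ε := by
    refine NormedSpace.norm_le_dual_bound ℝ _ (by nlinarith [norm_nonneg x]) fun f => ?_
    have hsplit : f (‖x‖ ^ n • (x - σ ^ n • y)) =
        (f x * ‖x‖ ^ n - f y * t ^ n) + σ ^ n * f y * (|t| ^ n - ‖x‖ ^ n) := by
      have htσn : t ^ n = σ ^ n * |t| ^ n := by rw [← mul_pow, ← htσ]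
      rw [htσn, map_smul, map_sub, map_smul, smul_eq_mul, smul_eq_mul]
      ring
    have hfy : |f y| ≤ ‖f‖ * ‖x‖ := (f.le_opNorm y).trans (by gcongr)
    calc ‖f (‖x‖ ^ n • (x - σ ^ n • y))‖
        ≤ |f x * ‖x‖ ^ n - f y * t ^ n| + |f y| * (‖x‖ ^ n - |t| ^ n) := by
          rw [hsplit, Real.norm_eq_abs]
          refine (abs_add_le _ _).trans_eq ?_
          rw [abs_mul, abs_mul, hσn, one_mul, abs_sub_comm (|t| ^ n),
            abs_of_nonneg (sub_nonneg.2 htn)]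
      _ ≤ ‖f‖ * ε + ‖f‖ * ‖x‖ * (‖x‖ ^ n - |t| ^ n) := by
          gcongr
          exact hC f
      _ ≤ 2 * ε * ‖f‖ := by nlinarith [norm_nonneg f]
  rwa [norm_smul, norm_pow, norm_norm, mul_comm] at hdual

theorem exists_pow_eq_one_norm_sub_smul_mul_pow_le_of_le_norm (hN : IsReasonableCrossNorm N)
    {x y : X} {c : ℝ} (hc : 0 ≤ c) (hx : c ≤ ‖x‖) (hy : c ≤ ‖y‖) :
    ∃ s : ℝ, s ^ (n + 1) = 1 ∧
      ‖x - s • y‖ * c ^ n ≤ 2 * N ((tprod ℝ fun _ => x) - tprod ℝ fun _ => y) := by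
  rcases le_total ‖y‖ ‖x‖ with hyx | hxy
  · obtain ⟨s, hs, hle⟩ := hN.exists_pow_eq_one_norm_sub_smul_mul_pow_le hyx
    exact ⟨s, hs, le_trans (by gcongr) hle⟩
  · obtain ⟨s, hs, hle⟩ := hN.exists_pow_eq_one_norm_sub_smul_mul_pow_le hxy
    refine ⟨s, hs, ?_⟩
    have hswap : ‖x - s • y‖ = ‖y - s • x‖ := by
      rcases eq_one_or_eq_neg_one_of_pow_eq_one n.succ_ne_zero hs with rfl | rfl
      · simp [norm_sub_rev]
      · simp [add_comm]
    rw [hswap, hN.1.apply_sub_rev]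
    exact le_trans (by gcongr) hle

theorem exists_cauchySeq_tprod_eq (hN : IsReasonableCrossNorm N) {E : Type*}
    [NormedAddCommGroup E] [NormedSpace ℝ E] (ι : (⨂[ℝ] (_ : Fin (n + 1)), X) →ₗ[ℝ] E)
    (hι : ∀ z, ‖ι z‖ = N z) {x : ℕ → X} {c : ℝ} (hc : 0 < c)
    (hxc : ∀ k, c ≤ ‖x k‖) (hx : CauchySeq fun k => ι (tprod ℝ fun _ => x k)) :
    ∃ z : ℕ → X, CauchySeq z ∧
      ∀ k, (tprod ℝ fun _ : Fin (n + 1) => z k) = tprod ℝ fun _ => x k := by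
  have key {a b : X} {δ : ℝ} (ha : c ≤ ‖a‖) (hb : c ≤ ‖b‖)
      (hab : dist (ι (tprod ℝ fun _ => a)) (ι (tprod ℝ fun _ => b)) < c ^ n * δ / 2) :
      ∃ s : ℝ, s ^ (n + 1) = 1 ∧ ‖a - s • b‖ < δ := by
    obtain ⟨s, hs, hle⟩ := hN.exists_pow_eq_one_norm_sub_smul_mul_pow_le_of_le_norm hc.le ha hb
    rw [dist_eq_norm, ← map_sub, hι] at hab
    exact ⟨s, hs, lt_of_mul_lt_mul_right (by linarith) (pow_nonneg hc.le n)⟩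
  -- Flip signs so that every later term lies within `c / 2` of `x K`.
  obtain ⟨K, hK⟩ := Metric.cauchySeq_iff'.1 hx (c ^ n * (c / 2) / 2) (by positivity)
  have hsel (k : ℕ) : ∃ s : ℝ, s ^ (n + 1) = 1 ∧ (K ≤ k → ‖x K - s • x k‖ < c / 2) := by
    by_cases hk : K ≤ k
    · obtain ⟨s, hs, hlt⟩ := key (hxc K) (hxc k) (by rw [dist_comm]; exact hK k hk)
      exact ⟨s, hs, fun _ => hlt⟩
    · exact ⟨1, one_pow _, fun h => absurd h hk⟩
  choose s hs hsK using hsel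
  have hsign (k : ℕ) : s k = 1 ∨ s k = -1 :=
    eq_one_or_eq_neg_one_of_pow_eq_one n.succ_ne_zero (hs k)
  have htprod (k : ℕ) :
      (tprod ℝ fun _ => s k • x k) = tprod ℝ fun _ : Fin (n + 1) => x k := by
    rw [tprod_const_smul, hs, one_smul]
  have hzc (k : ℕ) : c ≤ ‖s k • x k‖ := by rcases hsign k with h | h <;> simp [h, hxc]
  refine ⟨fun k => s k • x k, ?_, htprod⟩
  refine cauchySeq_of_forall_sub_or_add_lt (w := x K) (norm_pos_iff.1 (hc.trans_le (hxc K)))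
    (eventually_atTop.2 ⟨K, fun k hk => (hsK k hk).le.trans (by linarith [hxc K])⟩)
    fun η hη => ?_
  obtain ⟨M, hM⟩ := Metric.cauchySeq_iff.1 hx (c ^ n * η / 2) (by positivity)
  refine ⟨M, fun m hm k hk => ?_⟩
  obtain ⟨t, ht, hlt⟩ := key (hzc m) (hzc k) (by rw [htprod, htprod]; exact hM m hm k hk)
  rcases eq_one_or_eq_neg_one_of_pow_eq_one n.succ_ne_zero ht with rfl | rfl
  · exact .inl (by simpa using hlt)
  · exact .inr (by simpa using hlt)

theorem isClosed_range_comp_tprod_const [CompleteSpace X] (hN : IsReasonableCrossNorm N)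
    {E : Type*} [NormedAddCommGroup E] [NormedSpace ℝ E]
    (ι : (⨂[ℝ] (_ : Fin (n + 1)), X) →ₗ[ℝ] E) (hι : ∀ z, ‖ι z‖ = N z) :
    IsClosed (Set.range fun x : X => ι (tprod ℝ fun _ : Fin (n + 1) => x)) := by
  refine IsSeqClosed.isClosed fun u e hu hue => ?_
  choose x hx using hu
  rcases eq_or_ne e 0 with rfl | he
  · refine ⟨0, ?_⟩
    simp only [(PiTensorProduct.tprod ℝ).map_coord_zero (m := fun _ : Fin (n + 1) => (0 : X))
      0 rfl, map_zero]
  have hux (k : ℕ) : ‖u k‖ ≤ ‖x k‖ ^ (n + 1) := by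
    simpa [← hx, hι] using hN.2.1 fun _ => x k
  have hbound (t : ℝ) (ht : 0 ≤ t) (h : ‖e‖ / 2 < t ^ (n + 1)) : min 1 (‖e‖ / 2) ≤ t := by
    by_contra! hlt
    have := pow_le_of_le_one ht (hlt.le.trans (min_le_left _ _)) n.add_one_ne_zero
    linarith [min_le_right 1 (‖e‖ / 2)]
  obtain ⟨K, hK⟩ := eventually_atTop.1
    (hue.norm.eventually_const_lt (half_lt_self (norm_pos_iff.2 he)))
  obtain ⟨z, hz, hzx⟩ := hN.exists_cauchySeq_tprod_eq ι hι (c := min 1 (‖e‖ / 2))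
    (by positivity) (fun k => hbound _ (norm_nonneg _) ((hK (k + K) le_add_self).trans_le (hux _)))
    (by simp only [hx]; exact hue.cauchySeq.comp_tendsto (tendsto_add_atTop_nat K))
  obtain ⟨z₀, hz₀⟩ := cauchySeq_tendsto_of_complete hz
  refine ⟨z₀, tendsto_nhds_unique ?_ ((tendsto_add_atTop_iff_nat K).2 hue)⟩
  simpa [Function.comp_def, hzx, hx] using
    ((hN.continuous_comp_tprod_const ι hι).tendsto z₀).comp hz₀

end Real

end IsReasonableCrossNorm

/-- `E` stands for the completion `⊗̂_α^d X` of `(⊗^d X, α)`. -/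
theorem veronese_cone_complete_general {X : Type*} [NormedAddCommGroup X] [NormedSpace ℝ X]
    [CompleteSpace X] {d : ℕ} (hd : 1 ≤ d)
    (α : (⨂[ℝ] (_ : Fin d), X) → ℝ) (hα : IsReasonableCrossNorm α)
    {E : Type*} [NormedAddCommGroup E] [NormedSpace ℝ E] [CompleteSpace E]
    (ι : (⨂[ℝ] (_ : Fin d), X) →ₗ[ℝ] E)
    (hιiso : ∀ z, ‖ι z‖ = α z) :
    IsComplete {e : E | ∃ x : X, e = ι (tprod ℝ (fun _ : Fin d => x))} := by
  obtain ⟨n, rfl⟩ : ∃ n, d = n + 1 := ⟨d - 1, by omega⟩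
  have hrange : {e : E | ∃ x : X, e = ι (tprod ℝ (fun _ : Fin (n + 1) => x))} =
      Set.range fun x : X => ι (tprod ℝ fun _ : Fin (n + 1) => x) := by
    ext
    simp [eq_comm]
  exact hrange ▸ (hα.isClosed_range_comp_tprod_const ι hιiso).isComplete

/-- the Veronese cone `(𝕍^d_X, d_α)` is a complete metric space, where the
completion `⊗̂_α^d X` is modelled as a Banach space `E` together with a dense isometric
linear embedding `ι` of the algebraic tensor product equipped with the reasonable cross
norm `α`. -/
theorem veronese_cone_complete {X : Type*} [NormedAddCommGroup X] [NormedSpace ℝ X]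
    [CompleteSpace X] {d : ℕ} (hd : 1 ≤ d)
    (α : (⨂[ℝ] (_ : Fin d), X) → ℝ) (hα : IsReasonableCrossNorm α)
    {E : Type*} [NormedAddCommGroup E] [NormedSpace ℝ E] [CompleteSpace E]
    (ι : (⨂[ℝ] (_ : Fin d), X) →ₗ[ℝ] E)
    (hιiso : ∀ z, ‖ι z‖ = α z) (hιdense : Dense (Set.range ι)) :
    IsComplete {e : E | ∃ x : X, e = ι (tprod ℝ (fun _ : Fin d => x))} :=
  veronese_cone_complete_general hd α hα ι hιiso
end

section
/- Let Z be a complemented closed subspace of a Banach space X witnessed by a bounded linear projection Π : X → X with range Z, let d ≥ 1 and α a tensor norm. Then Π^{⊗d} is a bounded linear projection on ⊗̂_α^d X whose image of the Veronese cone 𝕍^d_X is exactly the Veronese cone 𝕍^d_Z. -/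
open scoped TensorProduct
open PiTensorProduct

/-- A tensor norm: a reasonable cross norm satisfying the metric mapping property. -/
def IsTensorNorm {𝕜 : Type*} [RCLike 𝕜] {X : Type*} [NormedAddCommGroup X]
    [NormedSpace 𝕜 X] {d : ℕ} (N : (⨂[𝕜] (_ : Fin d), X) → ℝ) : Prop :=
  IsReasonableCrossNorm N ∧
    ∀ (S : Fin d → (X →L[𝕜] X)) (z : ⨂[𝕜] (_ : Fin d), X),
      N (PiTensorProduct.map (fun i => (S i).toLinearMap) z) ≤ (∏ i, ‖S i‖) * N z

/-- if `Pr` is a bounded projection of `X` onto a closed subspace `Z`, then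
`Pr^{⊗d}` extends to a bounded projection `Q` on the completion `⊗̂_α^d X` (modelled by a
Banach space `E` and a dense isometric embedding `ι`) mapping the Veronese cone `𝕍^d_X`
exactly onto `𝕍^d_Z`. -/
theorem veronese_projection {X : Type*} [NormedAddCommGroup X] [NormedSpace ℝ X]
    [CompleteSpace X] (Z : Submodule ℝ X) (hZ : IsClosed (Z : Set X))
    (Pr : X →L[ℝ] X) (hidem : Pr.comp Pr = Pr) (hrange : LinearMap.range Pr.toLinearMap = Z)
    {d : ℕ} (hd : 1 ≤ d)
    (α : (⨂[ℝ] (_ : Fin d), X) → ℝ) (hα : IsTensorNorm α)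
    {E : Type*} [NormedAddCommGroup E] [NormedSpace ℝ E] [CompleteSpace E]
    (ι : (⨂[ℝ] (_ : Fin d), X) →ₗ[ℝ] E)
    (hιiso : ∀ z, ‖ι z‖ = α z) (hιdense : Dense (Set.range ι)) :
    ∃ Q : E →L[ℝ] E,
      (∀ z : ⨂[ℝ] (_ : Fin d), X,
        Q (ι z) = ι (PiTensorProduct.map (fun _ : Fin d => Pr.toLinearMap) z)) ∧
      Q.comp Q = Q ∧
      Q '' {e : E | ∃ x : X, e = ι (tprod ℝ (fun _ : Fin d => x))} =
        {e : E | ∃ z : Z, e = ι (tprod ℝ (fun _ : Fin d => (z : X)))} := by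
  classical
  -- basic facts
  obtain ⟨⟨⟨hzero, _, _⟩, _, _⟩, hmm⟩ := hα
  set M : (⨂[ℝ] (_ : Fin d), X) →ₗ[ℝ] (⨂[ℝ] (_ : Fin d), X) :=
    PiTensorProduct.map (fun _ : Fin d => Pr.toLinearMap) with hM
  have hMM : ∀ z, M (M z) = M z := by
    intro z
    have h1 : (PiTensorProduct.map (fun _ : Fin d =>
        Pr.toLinearMap ∘ₗ Pr.toLinearMap) : (⨂[ℝ] (_ : Fin d), X) →ₗ[ℝ] _) = M ∘ₗ M :=
      PiTensorProduct.map_comp _ _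
    have h2 : (fun _ : Fin d => Pr.toLinearMap ∘ₗ Pr.toLinearMap)
        = fun _ : Fin d => Pr.toLinearMap := by
      funext i
      have := congrArg ContinuousLinearMap.toLinearMap hidem
      exact this
    rw [h2] at h1
    exact (LinearMap.congr_fun h1 z).symm
  have hinj : Function.Injective ι := by
    intro a b hab
    have h0 : α (a - b) = 0 := by
      rw [← hιiso, map_sub, hab, sub_self, norm_zero]
    have := (hzero _).mp h0
    exact sub_eq_zero.mp this
  set p : Submodule ℝ E := LinearMap.range ι with hp
  set C : ℝ := ∏ _i : Fin d, ‖Pr‖ with hC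
  -- the map on the range of ι
  set eqv : (⨂[ℝ] (_ : Fin d), X) ≃ₗ[ℝ] p := LinearEquiv.ofInjective ι hinj with heqv
  set g₀ : p →ₗ[ℝ] E := (ι ∘ₗ M) ∘ₗ (eqv.symm : p →ₗ[ℝ] (⨂[ℝ] (_ : Fin d), X)) with hg₀
  have hg₀apply : ∀ z, g₀ (eqv z) = ι (M z) := by
    intro z
    simp [hg₀, LinearEquiv.symm_apply_apply]
  have hcoe : ∀ z, ((eqv z : p) : E) = ι z := fun z => rfl
  have hbound : ∀ x : p, ‖g₀ x‖ ≤ C * ‖x‖ := by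
    intro x
    obtain ⟨z, hz⟩ : ∃ z, eqv z = x := ⟨eqv.symm x, eqv.apply_symm_apply x⟩
    subst hz
    rw [hg₀apply, hιiso]
    calc α (M z) ≤ (∏ _i : Fin d, ‖Pr‖) * α z := hmm (fun _ => Pr) z
      _ = C * ‖(eqv z : E)‖ := by rw [hcoe, hιiso]
  set g : p →L[ℝ] E := g₀.mkContinuous C hbound with hg
  set e : p →L[ℝ] E := p.subtypeL with he
  have hdense : DenseRange e := by
    have : Set.range e = Set.range ι := by
      ext x
      constructor
      · rintro ⟨⟨y, hy⟩, rfl⟩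
        exact hy
      · rintro ⟨z, rfl⟩
        exact ⟨⟨ι z, ⟨z, rfl⟩⟩, rfl⟩
    rw [DenseRange, this]
    exact hιdense
  have hui : IsUniformInducing e := isUniformEmbedding_subtype_val.isUniformInducing
  set Q : E →L[ℝ] E := g.extend e with hQ
  have hQι : ∀ z, Q (ι z) = ι (M z) := by
    intro z
    have h1 : ι z = e (eqv z) := rfl
    rw [hQ, h1, ContinuousLinearMap.extend_eq _ hdense hui]
    exact hg₀apply z
  have hPrfix : ∀ x : X, x ∈ Z → Pr x = x := by
    intro x hx
    rw [← hrange] at hx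
    obtain ⟨y, hy⟩ := hx
    have h2 : Pr (Pr y) = Pr y := by
      have := DFunLike.congr_fun hidem y
      simpa using this
    have hy' : Pr y = x := hy
    rw [← hy']
    exact h2
  refine ⟨Q, hQι, ?_, ?_⟩
  · have hfun : (fun x => Q (Q x)) = fun x => Q x := by
      refine Continuous.ext_on hιdense (Q.continuous.comp Q.continuous) Q.continuous ?_
      rintro x ⟨z, rfl⟩
      simp only [hQι, hMM]
    exact ContinuousLinearMap.ext fun x => congrFun hfun x
  · ext x
    constructor
    · rintro ⟨a, ⟨x0, rfl⟩, rfl⟩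
      have hmt : M (tprod ℝ fun _ : Fin d => x0) = tprod ℝ (fun _ : Fin d => Pr x0) :=
        PiTensorProduct.map_tprod _ _
      refine ⟨⟨Pr x0, ?_⟩, ?_⟩
      · rw [← hrange]; exact ⟨x0, rfl⟩
      · rw [hQι, hmt]
    · rintro ⟨z, rfl⟩
      refine ⟨ι (tprod ℝ fun _ : Fin d => (z : X)), ⟨(z : X), rfl⟩, ?_⟩
      rw [hQι]
      congr 1
      rw [PiTensorProduct.map_tprod]
      congr 1
      funext _
      exact hPrfix _ z.2
end

section
/- The closed unit ball of ⊗̂_{s,π}^d X coincides with the closed balanced convex hull of the set { x ⊗ ⋯ ⊗ x : x ∈ X, ‖x‖ ≤ 1 }. -/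
open scoped TensorProduct
open PiTensorProduct

/-- `P : X → Y` is a continuous `d`-homogeneous polynomial: the diagonal of a continuous
`d`-linear map. -/
def IsHomogPoly {X Y : Type*} [NormedAddCommGroup X] [NormedSpace ℝ X]
    [NormedAddCommGroup Y] [NormedSpace ℝ Y] (d : ℕ) (P : X → Y) : Prop :=
  ∃ M : ContinuousMultilinearMap ℝ (fun _ : Fin d => X) Y, ∀ x, P x = M (fun _ => x)

/-- The norm of a `d`-homogeneous polynomial `P`. -/
noncomputable def polyNorm {X Y : Type*} [NormedAddCommGroup X] [NormedSpace ℝ X]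
    [NormedAddCommGroup Y] [NormedSpace ℝ Y] (P : X → Y) : ℝ :=
  sSup {r : ℝ | ∃ x : X, ‖x‖ ≤ 1 ∧ r = ‖P x‖}

/-- `(S, τ)` is a model of the completed symmetric projective tensor product
`⊗̂_{s,π}^d X`: `τ` is a continuous symmetric `d`-linear map into `S`, the span of the
diagonal elements `δ x := τ(x,…,x)` is dense, and on that span the norm of `S` is the
symmetric projective norm `‖u‖_{s,π} = inf { Σ |cᵢ| ‖xᵢ‖^d : u = Σ cᵢ • δ(xᵢ) }`. -/
def IsSymProjTensorModel {X : Type*} [NormedAddCommGroup X] [NormedSpace ℝ X] (d : ℕ)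
    (S : Type*) [NormedAddCommGroup S] [NormedSpace ℝ S]
    (τ : ContinuousMultilinearMap ℝ (fun _ : Fin d => X) S) : Prop :=
  (∀ (σ : Equiv.Perm (Fin d)) (m : Fin d → X), τ (m ∘ σ) = τ m) ∧
  Dense ((Submodule.span ℝ (Set.range fun x : X => τ fun _ => x) : Submodule ℝ S) : Set S) ∧
  ∀ u ∈ Submodule.span ℝ (Set.range fun x : X => τ fun _ => x),
    ‖u‖ = sInf {r : ℝ | ∃ (n : ℕ) (c : Fin n → ℝ) (x : Fin n → X),
      u = ∑ k, c k • τ (fun _ => x k) ∧ r = ∑ k, |c k| * ‖x k‖ ^ d}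

/-- the closed unit ball of `⊗̂_{s,π}^d X` is the closed balanced convex
hull of the diagonal elements `x ⊗ ⋯ ⊗ x` with `‖x‖ ≤ 1`. -/
theorem closedBall_eq_closure_balanced_convexHull {X : Type*}
    [NormedAddCommGroup X] [NormedSpace ℝ X] [CompleteSpace X]
    {d : ℕ} (hd : 1 ≤ d)
    (S : Type*) [NormedAddCommGroup S] [NormedSpace ℝ S] [CompleteSpace S]
    (τ : ContinuousMultilinearMap ℝ (fun _ : Fin d => X) S)
    (hS : IsSymProjTensorModel d S τ) :
    Metric.closedBall (0 : S) 1 =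
      closure (convexHull ℝ
        (balancedHull ℝ ((fun x : X => τ fun _ => x) '' Metric.closedBall (0 : X) 1))) := by
  obtain ⟨hsym, hdense, hnorm⟩ := hS
  set δ : X → S := fun x => τ fun _ => x with hδdef
  have hd0 : δ 0 = 0 := τ.map_coord_zero (⟨0, hd⟩ : Fin d) rfl
  have hδapp : ∀ x : X, δ x = τ fun _ => x := fun _ => rfl
  set D : Set S := δ '' Metric.closedBall 0 1 with hDdef
  set B : Set S := balancedHull ℝ D with hBdef
  set C : Set S := convexHull ℝ B with hCdef
  have hDC : D ⊆ C := (subset_balancedHull ℝ).trans (subset_convexHull ℝ B)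
  have h0C : (0 : S) ∈ C := hDC ⟨0, by simp, hd0⟩
  have hnδ : ∀ x : X, ‖δ x‖ ≤ ‖x‖ ^ d := by
    intro x
    have hx : δ x ∈ Submodule.span ℝ (Set.range δ) := Submodule.subset_span ⟨x, rfl⟩
    rw [hnorm (δ x) hx]
    refine csInf_le ⟨0, ?_⟩ ?_
    · rintro r ⟨n, c, y, -, rfl⟩
      positivity
    · exact ⟨1, fun _ => 1, fun _ => x, by simp [hδdef], by simp⟩
  have key : ∀ u ∈ Submodule.span ℝ (Set.range δ), ‖u‖ < 1 → u ∈ C := by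
    intro u hu hu1
    rw [hnorm u hu] at hu1
    set A : Set ℝ := {r : ℝ | ∃ (n : ℕ) (c : Fin n → ℝ) (x : Fin n → X),
      u = ∑ k, c k • τ (fun _ => x k) ∧ r = ∑ k, |c k| * ‖x k‖ ^ d} with hA
    have hbdd : BddBelow A := by
      refine ⟨0, ?_⟩
      rintro s ⟨n, c, y, -, rfl⟩
      positivity
    have hne : A.Nonempty := by
      obtain ⟨n, c, g, hg⟩ := Submodule.mem_span_set'.mp hu
      choose y hy using fun k => (g k).2
      refine ⟨∑ k, |c k| * ‖y k‖ ^ d, n, c, y, ?_, rfl⟩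
      rw [← hg]
      exact (Finset.sum_congr rfl fun k _ => congrArg (c k • ·) (hy k)).symm
    obtain ⟨r, ⟨n, c, x, hux, hr⟩, hr1⟩ := (csInf_lt_iff hbdd hne).mp hu1
    set w : Fin n → ℝ := fun k => |c k| * ‖x k‖ ^ d with hwdef
    set y : Fin n → S := fun k => Real.sign (c k) • δ (‖x k‖⁻¹ • x k) with hydef
    have hsign : ∀ k, |Real.sign (c k)| ≤ 1 := by
      intro k
      rcases Real.sign_apply_eq (c k) with h | h | h <;> rw [h] <;> norm_num
    have hyB : ∀ k, y k ∈ B := by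
      intro k
      have h1 : δ (‖x k‖⁻¹ • x k) ∈ D := by
        refine ⟨‖x k‖⁻¹ • x k, ?_, rfl⟩
        rw [Metric.mem_closedBall, dist_zero_right, norm_smul, norm_inv, norm_norm]
        rcases eq_or_ne (x k) 0 with h | h
        · simp [h]
        · rw [inv_mul_cancel₀ (norm_ne_zero_iff.mpr h)]
      exact (balancedHull.balanced (𝕜 := ℝ) D).smul_mem
        (by rw [Real.norm_eq_abs]; exact hsign k) (subset_balancedHull ℝ h1)
    have hwy : ∀ k, w k • y k = c k • τ (fun _ : Fin d => x k) := by
      intro k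
      have hsgn : Real.sign (c k) * |c k| = c k := by
        rcases lt_trichotomy (c k) 0 with h | h | h
        · rw [Real.sign_of_neg h, abs_of_neg h]; ring
        · simp [h]
        · rw [Real.sign_of_pos h, abs_of_pos h]; ring
      rcases eq_or_ne (x k) 0 with h | h
      · have h0 : τ (fun _ : Fin d => (0 : X)) = 0 := hd0
        simp [hwdef, hydef, h, hδapp, h0]
      · have hx0 : ‖x k‖ ≠ 0 := norm_ne_zero_iff.mpr h
        have hδs : δ (‖x k‖⁻¹ • x k) = (‖x k‖⁻¹) ^ d • δ (x k) := by
          have h2 := τ.toMultilinearMap.map_smul_univ (fun _ : Fin d => ‖x k‖⁻¹)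
            (fun _ => x k)
          simpa [hδdef, Finset.prod_const] using h2
        have hy' : y k = (Real.sign (c k) * (‖x k‖⁻¹) ^ d) • δ (x k) := by
          rw [hydef]; simp only [hδs, smul_smul]
        rw [hy', smul_smul]
        show (w k * (Real.sign (c k) * (‖x k‖⁻¹) ^ d)) • δ (x k) = c k • δ (x k)
        congr 1
        rw [hwdef]
        simp only [inv_pow]
        have hxd : (‖x k‖ : ℝ) ^ d ≠ 0 := pow_ne_zero _ hx0
        calc |c k| * ‖x k‖ ^ d * (Real.sign (c k) * (‖x k‖ ^ d)⁻¹)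
            = Real.sign (c k) * |c k| * (‖x k‖ ^ d * (‖x k‖ ^ d)⁻¹) := by ring
          _ = c k := by rw [mul_inv_cancel₀ hxd, hsgn, mul_one]
    have hr0 : 0 ≤ r := by rw [hr]; positivity
    have hux' : u = ∑ k, w k • y k := by
      rw [hux]
      exact (Finset.sum_congr rfl fun k _ => hwy k).symm
    have hmem := (convex_convexHull ℝ B).sum_mem (t := (Finset.univ : Finset (Fin (n + 1))))
      (w := Fin.snoc w (1 - r)) (z := Fin.snoc y 0) ?_ ?_ ?_
    rotate_left
    · intro i _
      refine Fin.lastCases ?_ ?_ i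
      · rw [Fin.snoc_last]; linarith
      · intro j; rw [Fin.snoc_castSucc, hwdef]; positivity
    · rw [Fin.sum_univ_castSucc]
      simp only [Fin.snoc_castSucc, Fin.snoc_last]
      rw [hr] at hr1 ⊢
      linarith
    · intro i _
      refine Fin.lastCases ?_ ?_ i
      · rw [Fin.snoc_last]; exact h0C
      · intro j; rw [Fin.snoc_castSucc]; exact subset_convexHull ℝ B (hyB j)
    rw [Fin.sum_univ_castSucc] at hmem
    simp only [Fin.snoc_castSucc, Fin.snoc_last, smul_zero, add_zero] at hmem
    rwa [hux']
  apply subset_antisymm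
  · intro u hu
    rw [Metric.mem_closedBall, dist_zero_right] at hu
    rw [Metric.mem_closure_iff]
    intro ε hε
    set m : ℝ := min ε 1 / 2 with hm
    have hm0 : 0 < m := by positivity
    have hm1 : m ≤ 1 / 2 := by
      rw [hm]; have := min_le_right ε 1; linarith
    have hmε : m ≤ ε / 2 := by
      rw [hm]; have := min_le_left ε 1; linarith
    set u' : S := (1 - m) • u with hu'def
    have hu'1 : ‖u'‖ < 1 := by
      rw [hu'def, norm_smul, Real.norm_eq_abs, abs_of_nonneg (by linarith)]
      nlinarith [norm_nonneg u]
    have hη : 0 < min (ε / 2) (1 - ‖u'‖) := lt_min (by linarith) (by linarith)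
    obtain ⟨v, hv, hdv⟩ := hdense.exists_dist_lt u' hη
    have hv1 : ‖v‖ < 1 := by
      have h1 : ‖v‖ - ‖u'‖ ≤ ‖v - u'‖ := norm_sub_norm_le v u'
      have h2 : dist u' v < 1 - ‖u'‖ := lt_of_lt_of_le hdv (min_le_right _ _)
      rw [dist_comm, dist_eq_norm] at h2
      linarith
    refine ⟨v, key v hv hv1, ?_⟩
    have hdu : dist u u' = m * ‖u‖ := by
      rw [dist_eq_norm, hu'def]
      have : u - (1 - m) • u = m • u := by
        rw [sub_smul, one_smul, sub_sub_cancel]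
      rw [this, norm_smul, Real.norm_eq_abs, abs_of_pos hm0]
    have h3 : dist u v ≤ dist u u' + dist u' v := dist_triangle u u' v
    have h4 : dist u' v < ε / 2 := lt_of_lt_of_le hdv (min_le_left _ _)
    have h5 : m * ‖u‖ ≤ ε / 2 := by nlinarith [norm_nonneg u]
    linarith [hdu ▸ h3]
  · refine closure_minimal (convexHull_min ?_ (convex_closedBall 0 1)) Metric.isClosed_closedBall
    have hball : Balanced ℝ (Metric.closedBall (0 : S) 1) := by
      intro a ha
      rintro _ ⟨z, hz, rfl⟩
      rw [Metric.mem_closedBall, dist_zero_right] at hz ⊢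
      rw [norm_smul]
      nlinarith [norm_nonneg z, norm_nonneg a]
    refine Balanced.balancedHull_subset_of_subset hball ?_
    rintro _ ⟨x, hx, rfl⟩
    rw [Metric.mem_closedBall, dist_zero_right] at hx ⊢
    exact le_trans (hnδ x) (pow_le_one₀ (norm_nonneg x) hx)
end

section
/- Let P : X → Y be a continuous d-homogeneous polynomial with associated linear operator T_P ∈ L(⊗̂_{s,π}^d X, Y). Then the restriction of T_P to the Veronese cone 𝕍^d_X (with the metric d_{s,π} induced by ‖·‖_{s,π}) is a Lipschitz map, P factors as P = T_P|_{𝕍^d_X} ∘ ν^d_X where ν^d_X(x) = x ⊗ ⋯ ⊗ x, and the Lipschitz norm of T_P|_{𝕍^d_X} equals ‖P‖. -/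
open scoped TensorProduct
open PiTensorProduct

/-- the restriction of `T_P` to the Veronese cone is Lipschitz, `P` factors
as `P = T_P|_{𝕍} ∘ ν`, and the Lipschitz norm of the restriction equals `‖P‖`. -/
theorem factorization_through_veronese {X Y : Type*}
    [NormedAddCommGroup X] [NormedSpace ℝ X] [CompleteSpace X]
    [NormedAddCommGroup Y] [NormedSpace ℝ Y] [CompleteSpace Y]
    {d : ℕ} (hd : 1 ≤ d)
    (S : Type*) [NormedAddCommGroup S] [NormedSpace ℝ S] [CompleteSpace S]
    (τ : ContinuousMultilinearMap ℝ (fun _ : Fin d => X) S)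
    (hS : IsSymProjTensorModel d S τ)
    (P : X → Y) (hP : IsHomogPoly d P) (T : S →L[ℝ] Y)
    (hT : ∀ x : X, P x = T (τ fun _ => x)) :
    (∀ x y : X, ‖T (τ fun _ => x) - T (τ fun _ => y)‖ ≤
        polyNorm P * ‖(τ fun _ => x) - (τ fun _ => y)‖) ∧
    sInf {L : ℝ | 0 ≤ L ∧ ∀ x y : X, ‖T (τ fun _ => x) - T (τ fun _ => y)‖ ≤
        L * ‖(τ fun _ => x) - (τ fun _ => y)‖} = polyNorm P := by

  classical
  obtain ⟨M, hM⟩ := hP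
  obtain ⟨-, -, hnorm⟩ := hS
  have hd0 : d ≠ 0 := by omega
  set δ : X → S := fun x => τ (fun _ => x) with hδ
  have hspan : ∀ x : X, δ x ∈ Submodule.span ℝ (Set.range fun x : X => τ fun _ => x) :=
    fun x => Submodule.subset_span ⟨x, rfl⟩
  -- basic facts on polyNorm
  have hbdd : BddAbove {r : ℝ | ∃ x : X, ‖x‖ ≤ 1 ∧ r = ‖P x‖} := by
    refine ⟨‖M‖, ?_⟩
    rintro r ⟨x, hx, rfl⟩
    rw [hM]
    calc ‖M fun _ => x‖ ≤ ‖M‖ * ∏ _i : Fin d, ‖x‖ := M.le_opNorm _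
      _ ≤ ‖M‖ * 1 := by
          refine mul_le_mul_of_nonneg_left ?_ (norm_nonneg M)
          rw [Finset.prod_const]
          exact pow_le_one₀ (norm_nonneg x) hx
      _ = ‖M‖ := mul_one _
  have hP0 : P 0 = 0 := by
    rw [hM]
    exact M.map_coord_zero (⟨0, hd⟩ : Fin d) rfl
  have hpN0 : 0 ≤ polyNorm P := by
    refine le_csSup hbdd ⟨0, by simp, by rw [hP0]; simp⟩
  have homog : ∀ (t : ℝ) (x : X), P (t • x) = t ^ d • P x := by
    intro t x
    rw [hM, hM]
    have h := M.map_smul_univ (fun _ => t) (fun _ => x)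
    simpa [Finset.prod_const] using h
  have hPle : ∀ x : X, ‖P x‖ ≤ polyNorm P * ‖x‖ ^ d := by
    intro x
    rcases eq_or_ne x 0 with rfl | hx
    · simp [hP0, zero_pow hd0]
    · have hx0 : (0:ℝ) < ‖x‖ := norm_pos_iff.mpr hx
      have hxx : x = ‖x‖ • (‖x‖⁻¹ • x) := by
        rw [smul_smul, mul_inv_cancel₀ hx0.ne', one_smul]
      have hy1 : ‖(‖x‖⁻¹ • x)‖ = 1 := by
        rw [norm_smul, norm_inv, Real.norm_eq_abs, abs_of_pos hx0,
          inv_mul_cancel₀ hx0.ne']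
      have hmem : ‖P (‖x‖⁻¹ • x)‖ ≤ polyNorm P :=
        le_csSup hbdd ⟨‖x‖⁻¹ • x, hy1.le, rfl⟩
      calc ‖P x‖ = ‖x‖ ^ d * ‖P (‖x‖⁻¹ • x)‖ := by
            conv_lhs => rw [hxx]
            rw [homog, norm_smul, Real.norm_eq_abs, abs_of_nonneg (by positivity)]
        _ ≤ ‖x‖ ^ d * polyNorm P :=
            mul_le_mul_of_nonneg_left hmem (by positivity)
        _ = polyNorm P * ‖x‖ ^ d := mul_comm _ _
  -- key Lipschitz estimate
  have key : ∀ x y : X, ‖T (δ x) - T (δ y)‖ ≤ polyNorm P * ‖δ x - δ y‖ := by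
    intro x y
    have hu : δ x - δ y ∈ Submodule.span ℝ (Set.range fun x : X => τ fun _ => x) :=
      sub_mem (hspan x) (hspan y)
    have hnm := hnorm _ hu
    set R := {r : ℝ | ∃ (n : ℕ) (c : Fin n → ℝ) (xs : Fin n → X),
      δ x - δ y = ∑ k, c k • τ (fun _ => xs k) ∧ r = ∑ k, |c k| * ‖xs k‖ ^ d} with hR
    have hRne : R.Nonempty := by
      refine ⟨‖x‖ ^ d + ‖y‖ ^ d, 2, ![1, -1], ![x, y], ?_, ?_⟩
      · simp [Fin.sum_univ_two, sub_eq_add_neg, hδ]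
      · simp [Fin.sum_univ_two]
    have hRbdd : BddBelow R := by
      refine ⟨0, ?_⟩
      rintro r ⟨n, c, xs, -, rfl⟩
      positivity
    have hTr : ∀ r ∈ R, ‖T (δ x) - T (δ y)‖ ≤ polyNorm P * r := by
      rintro r ⟨n, c, xs, hrep, rfl⟩
      have heq : T (δ x) - T (δ y) = ∑ k, c k • P (xs k) := by
        calc T (δ x) - T (δ y) = T (δ x - δ y) := (map_sub T _ _).symm
          _ = T (∑ k, c k • τ (fun _ => xs k)) := by rw [← hrep]
          _ = ∑ k, c k • P (xs k) := by
              rw [map_sum]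
              refine Finset.sum_congr rfl fun k _ => ?_
              rw [map_smul, ← hT]
      rw [heq]
      calc ‖∑ k, c k • P (xs k)‖ ≤ ∑ k, ‖c k • P (xs k)‖ := norm_sum_le _ _
        _ = ∑ k, |c k| * ‖P (xs k)‖ := by
            simp [norm_smul, Real.norm_eq_abs]
        _ ≤ ∑ k, |c k| * (polyNorm P * ‖xs k‖ ^ d) :=
            Finset.sum_le_sum fun k _ =>
              mul_le_mul_of_nonneg_left (hPle _) (abs_nonneg _)
        _ = polyNorm P * ∑ k, |c k| * ‖xs k‖ ^ d := by
            rw [Finset.mul_sum]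
            exact Finset.sum_congr rfl fun k _ => by ring
    rw [hnm]
    rcases eq_or_lt_of_le hpN0 with h0 | hpos
    · obtain ⟨r, hr⟩ := hRne
      have := hTr r hr
      rw [← h0] at this ⊢
      simpa using this
    · refine le_of_forall_pos_le_add fun ε hε => ?_
      obtain ⟨r, hrR, hrlt⟩ := Real.lt_sInf_add_pos hRne (div_pos hε hpos)
      calc ‖T (δ x) - T (δ y)‖ ≤ polyNorm P * r := hTr r hrR
        _ ≤ polyNorm P * (sInf R + ε / polyNorm P) :=
            mul_le_mul_of_nonneg_left hrlt.le hpos.le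
        _ = polyNorm P * sInf R + ε := by
            rw [mul_add, mul_div_cancel₀ _ hpos.ne']
  refine ⟨key, ?_⟩
  have hδ0 : δ (0 : X) = 0 := τ.map_coord_zero (⟨0, hd⟩ : Fin d) rfl
  have hδle : ∀ x : X, ‖δ x‖ ≤ ‖x‖ ^ d := by
    intro x
    rw [hnorm _ (hspan x)]
    refine csInf_le ⟨0, ?_⟩ ?_
    · rintro r ⟨n, c, xs, -, rfl⟩
      positivity
    · exact ⟨1, fun _ => 1, fun _ => x, by simp [hδ], by simp⟩
  have hlb : ∀ L ∈ {L : ℝ | 0 ≤ L ∧ ∀ x y : X, ‖T (τ fun _ => x) - T (τ fun _ => y)‖ ≤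
      L * ‖(τ fun _ => x) - (τ fun _ => y)‖}, polyNorm P ≤ L := by
    rintro L ⟨hL0, hLip⟩
    refine csSup_le ⟨‖P 0‖, 0, by simp, rfl⟩ ?_
    rintro r ⟨x, hx, rfl⟩
    have h1 := hLip x 0
    rw [show (τ fun _ : Fin d => (0:X)) = 0 from hδ0] at h1
    rw [map_zero, sub_zero, sub_zero] at h1
    calc ‖P x‖ = ‖T (δ x)‖ := by rw [hT]
      _ ≤ L * ‖δ x‖ := h1
      _ ≤ L * ‖x‖ ^ d := mul_le_mul_of_nonneg_left (hδle x) hL0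
      _ ≤ L * 1 := mul_le_mul_of_nonneg_left
            (pow_le_one₀ (norm_nonneg x) hx) hL0
      _ = L := mul_one _
  refine le_antisymm (csInf_le ⟨0, fun L hL => hL.1⟩ ⟨hpN0, key⟩)
    (le_csInf ⟨polyNorm P, hpN0, key⟩ hlb)
end
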